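/- arXiv:1402.5129 — 5 statements merged into one kernel-verified Lean document; each statement's English description precedes it below -/
import Mathlib

section
/- Let p be a prime and let A and M be nonsingular n×n matrices over ℤ_p. Then the pairings ⟨ , ⟩_A and ⟨ , ⟩_M from ℤ_p^n × ℤ_p^n to ℚ_p/ℤ_p are equal if and only if both of the following hold: (1) A = M + MRM for some n×n matrix R over ℤ_p, and (2) the rank over 𝔽_p of the reduction of A modulo p equals the rank of the reduction of M modulo p. -/
open MeasureTheory Matrix Finset

noncomputable section

variable (p : ℕ) [Fact p.Prime]

/-- The additive subgroup `ℤ_p ⊆ ℚ_p`. -/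
def zpSubgroup : AddSubgroup ℚ_[p] := (PadicInt.subring p).toAddSubgroup

/-- The quotient group `ℚ_p/ℤ_p`. -/
abbrev QpModZp := ℚ_[p] ⧸ zpSubgroup p

/-- The pairing `⟨x,y⟩_A = yᵀ A⁻¹ x` computed in `ℚ_p` and reduced mod `ℤ_p`. -/
def pairingOf {n : ℕ} (A : Matrix (Fin n) (Fin n) ℤ_[p]) (x y : Fin n → ℤ_[p]) :
    QpModZp p :=
  QuotientAddGroup.mk (dotProduct (fun i => ((y i : ℚ_[p])))
    (((A.map (fun a => (a : ℚ_[p]))))⁻¹.mulVec (fun i => ((x i : ℚ_[p])))))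

namespace PairingAux

local notation "φ" => (PadicInt.Coe.ringHom : ℤ_[p] →+* ℚ_[p])

lemma phi_apply (z : ℤ_[p]) : φ z = (z : ℚ_[p]) := rfl

lemma phi_mem (z : ℤ_[p]) : φ z ∈ zpSubgroup p :=
  show φ z ∈ (PadicInt.subring p).toAddSubgroup from
    Subring.mem_toAddSubgroup.mpr ((PadicInt.mem_subring_iff p).mpr z.2)

lemma map_injective {n : ℕ} : Function.Injective
    (fun B : Matrix (Fin n) (Fin n) ℤ_[p] => B.map φ) := by
  intro B C h
  ext i j
  have := congrFun (congrFun h i) j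
  exact Subtype.coe_injective this

lemma isUnit_map_det {n : ℕ} (A : Matrix (Fin n) (Fin n) ℤ_[p]) (hA : A.det ≠ 0) :
    IsUnit (A.map φ).det := by
  rw [← RingHom.mapMatrix_apply, ← RingHom.map_det]
  exact isUnit_iff_ne_zero.mpr (PadicInt.coe_ne_zero.mpr hA)

lemma dot_map {n : ℕ} (S : Matrix (Fin n) (Fin n) ℤ_[p]) (x y : Fin n → ℤ_[p]) :
    dotProduct (fun i => ((y i : ℚ_[p])))
      ((S.map φ).mulVec (fun i => ((x i : ℚ_[p]))))
    = φ (dotProduct y (S.mulVec x)) := by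
  simp [dotProduct, Matrix.mulVec, map_sum, Finset.mul_sum, phi_apply]

lemma pair_iff {n : ℕ} (A M : Matrix (Fin n) (Fin n) ℤ_[p]) (x y : Fin n → ℤ_[p]) :
    (pairingOf p A x y = pairingOf p M x y) ↔
      dotProduct (fun i => ((y i : ℚ_[p])))
        (((M.map φ)⁻¹ - (A.map φ)⁻¹).mulVec (fun i => ((x i : ℚ_[p])))) ∈ zpSubgroup p := by
  unfold pairingOf
  rw [QuotientAddGroup.eq]
  rw [Matrix.sub_mulVec, dotProduct_sub, neg_add_eq_sub]
  rfl

section FieldAlg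

variable {n : ℕ} {K : Type*} [Field K]

lemma alg_main (A' M' : Matrix (Fin n) (Fin n) K) (hA : IsUnit A'.det) (hM : IsUnit M'.det) :
    M' + M' * ((M'⁻¹ - A'⁻¹) + (M'⁻¹ - A'⁻¹) * A' * (M'⁻¹ - A'⁻¹)) * M' = A' := by
  simp only [mul_add, add_mul, mul_sub, sub_mul, mul_one, one_mul, ← mul_assoc,
    Matrix.mul_nonsing_inv _ hM, Matrix.nonsing_inv_mul _ hA,
    Matrix.mul_nonsing_inv_cancel_right _ _ hA, Matrix.nonsing_inv_mul_cancel_right _ _ hM,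
    Matrix.mul_nonsing_inv_cancel_right _ _ hM, Matrix.nonsing_inv_mul_cancel_right _ _ hA]
  abel

lemma alg_U (A' M' : Matrix (Fin n) (Fin n) K) (hA : IsUnit A'.det) :
    1 + (M'⁻¹ - A'⁻¹) * A' = M'⁻¹ * A' := by
  rw [sub_mul, Matrix.nonsing_inv_mul _ hA]
  abel

lemma alg_V (A' M' : Matrix (Fin n) (Fin n) K) (hM : IsUnit M'.det) :
    1 - (M'⁻¹ - A'⁻¹) * M' = A'⁻¹ * M' := by
  rw [sub_mul, Matrix.nonsing_inv_mul _ hM]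
  abel

lemma alg_CR (M' B' C' R' : Matrix (Fin n) (Fin n) K) (hM : IsUnit M'.det)
    (hCB : C' * B' = 1) (hB : B' = 1 + R' * M') :
    M'⁻¹ - (M' * B')⁻¹ = C' * R' := by
  rw [Matrix.mul_inv_rev, Matrix.inv_eq_left_inv hCB]
  have h2 := hCB
  rw [hB, mul_add, mul_one] at h2
  have h1 : C' * (R' * M') = 1 - C' := eq_sub_of_add_eq' h2
  calc M'⁻¹ - C' * M'⁻¹ = (1 - C') * M'⁻¹ := by rw [sub_mul, one_mul]
    _ = C' * (R' * M') * M'⁻¹ := by rw [h1]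
    _ = C' * R' := by rw [← mul_assoc, Matrix.mul_nonsing_inv_cancel_right _ _ hM]

end FieldAlg

end PairingAux

open PairingAux

/-- Lemma 3.2 of BKLPR. For nonsingular `n × n` matrices `A`, `M` over `ℤ_p`,
the pairings `⟨ , ⟩_A` and `⟨ , ⟩_M` on `ℤ_p^n` are equal iff `A = M + MRM` for some
`R ∈ M_n(ℤ_p)` and the reductions of `A` and `M` modulo `p` have equal rank over `𝔽_p`. -/
theorem pairing_eq_iff_MRM_and_rank
    {n : ℕ} (A M : Matrix (Fin n) (Fin n) ℤ_[p]) (hA : A.det ≠ 0) (hM : M.det ≠ 0) :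
    (∀ x y : Fin n → ℤ_[p], pairingOf p A x y = pairingOf p M x y) ↔
      ((∃ R : Matrix (Fin n) (Fin n) ℤ_[p], A = M + M * R * M) ∧
        (A.map (PadicInt.toZMod : ℤ_[p] → ZMod p)).rank =
          (M.map (PadicInt.toZMod : ℤ_[p] → ZMod p)).rank) := by
  classical
  have hA' : IsUnit ((A.map (PadicInt.Coe.ringHom : ℤ_[p] →+* ℚ_[p])).det) :=
    isUnit_map_det p A hA
  have hM' : IsUnit ((M.map (PadicInt.Coe.ringHom : ℤ_[p] →+* ℚ_[p])).det) :=
    isUnit_map_det p M hM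
  set φ' : ℤ_[p] →+* ℚ_[p] := PadicInt.Coe.ringHom with hφ'
  set ψ : ℤ_[p] →+* ZMod p := PadicInt.toZMod with hψ
  constructor
  · -- forward direction
    intro h
    have hSnorm : ∀ i j, ‖((M.map φ')⁻¹ - (A.map φ')⁻¹) i j‖ ≤ 1 := by
      intro i j
      have hm := (pair_iff p A M (Pi.single j 1) (Pi.single i 1)).mp (h _ _)
      have hx : (fun k => (((Pi.single j (1:ℤ_[p]) : Fin n → ℤ_[p]) k : ℚ_[p]))) = Pi.single j (1:ℚ_[p]) := by
        funext k
        simp [Pi.single_apply, apply_ite (fun z : ℤ_[p] => (z : ℚ_[p]))]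
      have hy : (fun k => (((Pi.single i (1:ℤ_[p]) : Fin n → ℤ_[p]) k : ℚ_[p]))) = Pi.single i (1:ℚ_[p]) := by
        funext k
        simp [Pi.single_apply, apply_ite (fun z : ℤ_[p] => (z : ℚ_[p]))]
      rw [hx, hy, Matrix.mulVec_single, single_dotProduct] at hm
      simpa [zpSubgroup, PadicInt.mem_subring_iff] using hm
    set S : Matrix (Fin n) (Fin n) ℤ_[p] :=
      Matrix.of (fun i j => (⟨_, hSnorm i j⟩ : ℤ_[p])) with hSdef
    have hSmap : S.map φ' = (M.map φ')⁻¹ - (A.map φ')⁻¹ := by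
      ext i j
      rfl
    refine ⟨⟨S + S * A * S, ?_⟩, ?_⟩
    · apply map_injective p
      show (A.map φ') = (M + M * (S + S * A * S) * M).map φ'
      simp only [← RingHom.mapMatrix_apply, _root_.map_add, _root_.map_mul] at hSmap ⊢
      rw [hSmap]
      exact (alg_main _ _ hA' hM').symm
    · -- rank equality
      have hUmap : (1 + S * A).map φ' = (M.map φ')⁻¹ * (A.map φ') := by
        simp only [← RingHom.mapMatrix_apply, _root_.map_add, _root_.map_mul, _root_.map_one] at hSmap ⊢
        rw [hSmap]
        exact alg_U _ _ hA'
      have hVmap : (1 - S * M).map φ' = (A.map φ')⁻¹ * (M.map φ') := by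
        simp only [← RingHom.mapMatrix_apply, _root_.map_sub, _root_.map_mul, _root_.map_one] at hSmap ⊢
        rw [hSmap]
        exact alg_V _ _ hM'
      have hUV : (1 + S * A) * (1 - S * M) = 1 := by
        apply map_injective p
        show ((1 + S * A) * (1 - S * M)).map φ' = (1 : Matrix (Fin n) (Fin n) ℤ_[p]).map φ'
        simp only [← RingHom.mapMatrix_apply, _root_.map_mul, _root_.map_one]
        simp only [RingHom.mapMatrix_apply]
        rw [hUmap, hVmap, mul_assoc, Matrix.mul_nonsing_inv_cancel_left _ _ hA',
          Matrix.nonsing_inv_mul _ hM']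
      have hVU : (1 - S * M) * (1 + S * A) = 1 := by
        apply map_injective p
        show ((1 - S * M) * (1 + S * A)).map φ' = (1 : Matrix (Fin n) (Fin n) ℤ_[p]).map φ'
        simp only [← RingHom.mapMatrix_apply, _root_.map_mul, _root_.map_one]
        simp only [RingHom.mapMatrix_apply]
        rw [hUmap, hVmap, mul_assoc, Matrix.mul_nonsing_inv_cancel_left _ _ hM',
          Matrix.nonsing_inv_mul _ hA']
      have hAMU : A = M * (1 + S * A) := by
        apply map_injective p
        show A.map φ' = (M * (1 + S * A)).map φ'
        simp only [← RingHom.mapMatrix_apply, _root_.map_mul]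
        simp only [RingHom.mapMatrix_apply]
        rw [hUmap, Matrix.mul_nonsing_inv_cancel_left _ _ hM']
      have hUunit : IsUnit (1 + S * A) :=
        ⟨⟨1 + S * A, 1 - S * M, hUV, hVU⟩, rfl⟩
      have hUdet : IsUnit ((1 + S * A).det) := (Matrix.isUnit_iff_isUnit_det _).mp hUunit
      have : A.map (ψ : ℤ_[p] → ZMod p) =
          M.map (ψ : ℤ_[p] → ZMod p) * (1 + S * A).map (ψ : ℤ_[p] → ZMod p) := by
        conv_lhs => rw [hAMU]
        exact Matrix.map_mul
      rw [this]
      exact Matrix.rank_mul_eq_left_of_isUnit_det _ _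
        (by rw [← RingHom.mapMatrix_apply, ← RingHom.map_det]; exact hUdet.map ψ)
  · -- reverse direction
    rintro ⟨⟨R, hAR⟩, hrank⟩
    subst hAR
    set B : Matrix (Fin n) (Fin n) ℤ_[p] := 1 + R * M with hB
    have hMB : M + M * R * M = M * B := by
      rw [hB, mul_add, mul_one, ← mul_assoc]
    -- reductions mod p
    have hABm : (M + M * R * M).map (ψ : ℤ_[p] → ZMod p) =
        M.map (ψ : ℤ_[p] → ZMod p) * B.map (ψ : ℤ_[p] → ZMod p) := by
      rw [hMB]; exact Matrix.map_mul
    have hBm : B.map (ψ : ℤ_[p] → ZMod p) =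
        1 + R.map (ψ : ℤ_[p] → ZMod p) * M.map (ψ : ℤ_[p] → ZMod p) := by
      rw [hB]
      simp only [← RingHom.mapMatrix_apply, _root_.map_add, _root_.map_mul, _root_.map_one]
    have hBv : ∀ v : Fin n → ZMod p, (M.map (ψ : ℤ_[p] → ZMod p)).mulVec v = 0 →
        (B.map (ψ : ℤ_[p] → ZMod p)).mulVec v = v := by
      intro v hv
      rw [hBm, Matrix.add_mulVec, Matrix.one_mulVec, ← Matrix.mulVec_mulVec, hv,
        Matrix.mulVec_zero, add_zero]
    have hkerle : LinearMap.ker (M.map (ψ : ℤ_[p] → ZMod p)).mulVecLin ≤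
        LinearMap.ker ((M + M * R * M).map (ψ : ℤ_[p] → ZMod p)).mulVecLin := by
      intro v hv
      rw [LinearMap.mem_ker, Matrix.mulVecLin_apply] at hv ⊢
      rw [hABm, ← Matrix.mulVec_mulVec, hBv v hv, hv]
    have hfr : Module.finrank (ZMod p)
          (LinearMap.ker (M.map (ψ : ℤ_[p] → ZMod p)).mulVecLin) =
        Module.finrank (ZMod p)
          (LinearMap.ker ((M + M * R * M).map (ψ : ℤ_[p] → ZMod p)).mulVecLin) := by
      have r1 := LinearMap.finrank_range_add_finrank_ker
        ((M + M * R * M).map (ψ : ℤ_[p] → ZMod p)).mulVecLin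
      have r2 := LinearMap.finrank_range_add_finrank_ker
        (M.map (ψ : ℤ_[p] → ZMod p)).mulVecLin
      have hr : Module.finrank (ZMod p)
            (LinearMap.range ((M + M * R * M).map (ψ : ℤ_[p] → ZMod p)).mulVecLin) =
          Module.finrank (ZMod p)
            (LinearMap.range (M.map (ψ : ℤ_[p] → ZMod p)).mulVecLin) := hrank
      omega
    have hkereq : LinearMap.ker (M.map (ψ : ℤ_[p] → ZMod p)).mulVecLin =
        LinearMap.ker ((M + M * R * M).map (ψ : ℤ_[p] → ZMod p)).mulVecLin :=
      Submodule.eq_of_le_of_finrank_eq hkerle hfr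
    have hdetBb : (B.map (ψ : ℤ_[p] → ZMod p)).det ≠ 0 := by
      intro h0
      obtain ⟨v, hv0, hv⟩ := Matrix.exists_mulVec_eq_zero_iff.mpr h0
      have hvA : v ∈ LinearMap.ker ((M + M * R * M).map (ψ : ℤ_[p] → ZMod p)).mulVecLin := by
        rw [LinearMap.mem_ker, Matrix.mulVecLin_apply, hABm, ← Matrix.mulVec_mulVec, hv,
          Matrix.mulVec_zero]
      have hvM : (M.map (ψ : ℤ_[p] → ZMod p)).mulVec v = 0 := by
        have := hkereq ▸ hvA
        rwa [LinearMap.mem_ker, Matrix.mulVecLin_apply] at this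
      have : v = 0 := by rw [← hBv v hvM, hv]
      exact hv0 this
    have hdetB : IsUnit B.det := by
      by_contra hnot
      have hmem : B.det ∈ IsLocalRing.maximalIdeal ℤ_[p] :=
        (IsLocalRing.mem_maximalIdeal _).mpr (mem_nonunits_iff.mpr hnot)
      rw [← PadicInt.ker_toZMod, RingHom.mem_ker] at hmem
      apply hdetBb
      rw [← RingHom.mapMatrix_apply, ← RingHom.map_det]
      exact hmem
    have hCB : B⁻¹ * B = 1 := Matrix.nonsing_inv_mul _ hdetB
    intro x y
    rw [pair_iff]
    have hinveq : (M.map φ')⁻¹ - ((M + M * R * M).map φ')⁻¹ = ((B⁻¹ * R).map φ') := by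
      have hmapMB : (M + M * R * M).map φ' = (M.map φ') * (B.map φ') := by
        rw [hMB]; exact Matrix.map_mul
      rw [hmapMB]
      have h1 : (B⁻¹.map φ') * (B.map φ') = 1 := by
        rw [← Matrix.map_mul, hCB]
        simp only [← RingHom.mapMatrix_apply, _root_.map_one]
      have h2 : B.map φ' = 1 + (R.map φ') * (M.map φ') := by
        rw [hB]
        simp only [← RingHom.mapMatrix_apply, _root_.map_add, _root_.map_mul, _root_.map_one]
      rw [alg_CR (M.map φ') (B.map φ') (B⁻¹.map φ') (R.map φ') hM' h1 h2]
      exact (Matrix.map_mul).symm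
    rw [hinveq, dot_map]
    exact phi_mem p _

end
end

section
/- Let p be a prime and k ≥ 0. The number of invertible symmetric k×k matrices over the field 𝔽_p equals p^{k(k+1)/2} · ∏_{j=1}^{⌈k/2⌉} (1 - p^{1-2j}). -/
open Finset

noncomputable section


open Matrix Finset

set_option linter.unusedSectionVars false
set_option maxHeartbeats 1000000

noncomputable section

namespace MacW

variable {p : ℕ} [Fact p.Prime] {n : ℕ}

abbrev F (p : ℕ) := ZMod p

/-- Border a matrix with vector `b` and corner `c`. -/
def brd (A : Matrix (Fin n) (Fin n) (F p)) (b : Fin n → F p) (c : F p) :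
    Matrix (Fin (n+1)) (Fin (n+1)) (F p) :=
  Matrix.reindex finSumFinEquiv finSumFinEquiv
    (Matrix.fromBlocks A (Matrix.of fun i (_ : Fin 1) => b i)
      (Matrix.of fun (_ : Fin 1) j => b j) (Matrix.of fun _ _ => c))

/-- Extend a vector by one coordinate. -/
def app (x : Fin n → F p) (t : F p) : Fin (n+1) → F p :=
  Sum.elim x (fun _ => t) ∘ finSumFinEquiv.symm

@[simp] lemma app_comp (x : Fin n → F p) (t : F p) :
    app x t ∘ finSumFinEquiv = Sum.elim x (fun _ => t) := by
  funext s; simp [app]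

@[simp] lemma app_inl (x : Fin n → F p) (t : F p) (i : Fin n) :
    app x t (finSumFinEquiv (Sum.inl i)) = x i := by
  simp [app]

@[simp] lemma app_inr (x : Fin n → F p) (t : F p) (j : Fin 1) :
    app x t (finSumFinEquiv (Sum.inr j)) = t := by
  simp [app]

lemma app_eq_iff {x x' : Fin n → F p} {t t' : F p} :
    app x t = app x' t' ↔ x = x' ∧ t = t' := by
  constructor
  · intro h
    have h' : ∀ s, app x t (finSumFinEquiv s) = app x' t' (finSumFinEquiv s) :=
      fun s => congrFun h _
    refine ⟨funext fun i => ?_, ?_⟩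
    · have := h' (Sum.inl i); simpa [app] using this
    · have := h' (Sum.inr 0); simpa [app] using this
  · rintro ⟨rfl, rfl⟩; rfl

lemma app_zero : app (0 : Fin n → F p) (0 : F p) = 0 := by
  funext i; simp [app]; rcases finSumFinEquiv.symm i with a | a <;> simp

lemma app_eq_zero_iff {x : Fin n → F p} {t : F p} : app x t = 0 ↔ x = 0 ∧ t = 0 := by
  rw [← app_zero, app_eq_iff]

lemma app_surj (w : Fin (n+1) → F p) :
    w = app (fun i => w (finSumFinEquiv (Sum.inl i))) (w (finSumFinEquiv (Sum.inr 0))) := by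
  funext i
  rw [show i = finSumFinEquiv (finSumFinEquiv.symm i) by simp]
  rcases finSumFinEquiv.symm i with a | a
  · simp [app]
  · simp [app, Subsingleton.elim a 0]

lemma app_dot (u x : Fin n → F p) (s t : F p) :
    app u s ⬝ᵥ app x t = u ⬝ᵥ x + s * t := by
  rw [dotProduct, ← Equiv.sum_comp finSumFinEquiv (fun i => app u s i * app x t i),
    Fintype.sum_sum_type]
  simp [app, dotProduct]

lemma brd_mulVec (A : Matrix (Fin n) (Fin n) (F p)) (b : Fin n → F p) (c : F p)
    (x : Fin n → F p) (t : F p) :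
    brd A b c *ᵥ app x t = app (A *ᵥ x + t • b) (b ⬝ᵥ x + t * c) := by
  rw [brd, reindex_apply, submatrix_mulVec_equiv]
  have : app x t ∘ ⇑finSumFinEquiv.symm.symm = Sum.elim x (fun _ => t) := by
    simp
  rw [this, fromBlocks_mulVec]
  funext i
  simp only [Function.comp_apply, app]
  rcases finSumFinEquiv.symm i with a | a
  · simp [mulVec, dotProduct, mul_comm]
  · simp [mulVec, dotProduct, mul_comm]

/-- principal block -/
def blk (S : Matrix (Fin (n+1)) (Fin (n+1)) (F p)) : Matrix (Fin n) (Fin n) (F p) :=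
  Matrix.of fun i j => S (finSumFinEquiv (Sum.inl i)) (finSumFinEquiv (Sum.inl j))

def off (S : Matrix (Fin (n+1)) (Fin (n+1)) (F p)) : Fin n → F p :=
  fun i => S (finSumFinEquiv (Sum.inl i)) (finSumFinEquiv (Sum.inr 0))

def cor (S : Matrix (Fin (n+1)) (Fin (n+1)) (F p)) : F p :=
  S (finSumFinEquiv (Sum.inr 0)) (finSumFinEquiv (Sum.inr 0))

@[simp] lemma brd_apply (A : Matrix (Fin n) (Fin n) (F p)) (b : Fin n → F p) (c : F p)
    (s s' : Fin n ⊕ Fin 1) :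
    brd A b c (finSumFinEquiv s) (finSumFinEquiv s') =
      Matrix.fromBlocks A (Matrix.of fun i (_ : Fin 1) => b i)
        (Matrix.of fun (_ : Fin 1) j => b j) (Matrix.of fun _ _ => c) s s' := by
  simp [brd]

lemma brd_recon {S : Matrix (Fin (n+1)) (Fin (n+1)) (F p)} (hS : S.IsSymm) :
    brd (blk S) (off S) (cor S) = S := by
  funext i j
  rw [show i = finSumFinEquiv (finSumFinEquiv.symm i) by simp,
      show j = finSumFinEquiv (finSumFinEquiv.symm j) by simp]
  rcases finSumFinEquiv.symm i with a | a <;> rcases finSumFinEquiv.symm j with b | b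
  · simp [brd, blk]
  · simp [brd, off, Subsingleton.elim b 0]
  · simp only [brd, reindex_apply, submatrix_apply, finSumFinEquiv_apply_left,
      finSumFinEquiv_apply_right, finSumFinEquiv_symm_apply_castAdd,
      finSumFinEquiv_symm_apply_natAdd, fromBlocks_apply₂₁, of_apply, off]
    rw [Subsingleton.elim a 0]
    conv_rhs => rw [← hS]
    rfl
  · simp [brd, cor, Subsingleton.elim a 0, Subsingleton.elim b 0]

lemma brd_isSymm {A : Matrix (Fin n) (Fin n) (F p)} (hA : A.IsSymm) (b : Fin n → F p)
    (c : F p) : (brd A b c).IsSymm := by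
  unfold Matrix.IsSymm
  rw [brd, transpose_reindex, fromBlocks_transpose, hA]
  congr 1

lemma blk_isSymm {S : Matrix (Fin (n+1)) (Fin (n+1)) (F p)} (hS : S.IsSymm) :
    (blk S).IsSymm := by
  unfold Matrix.IsSymm
  funext i j
  simp only [transpose_apply, blk, of_apply]
  conv_rhs => rw [← hS]
  rfl

lemma brd_eq_iff {A A' : Matrix (Fin n) (Fin n) (F p)} {b b' : Fin n → F p} {c c' : F p} :
    brd A b c = brd A' b' c' ↔ A = A' ∧ b = b' ∧ c = c' := by
  constructor
  · intro h
    have h' : ∀ s s', brd A b c (finSumFinEquiv s) (finSumFinEquiv s')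
        = brd A' b' c' (finSumFinEquiv s) (finSumFinEquiv s') := fun s s' => by rw [h]
    refine ⟨funext fun i => funext fun j => ?_, funext fun i => ?_, ?_⟩
    · have := h' (Sum.inl i) (Sum.inl j); simpa [brd] using this
    · have := h' (Sum.inl i) (Sum.inr 0); simpa [brd] using this
    · have := h' (Sum.inr 0) (Sum.inr 0); simpa [brd] using this
  · rintro ⟨rfl, rfl, rfl⟩; rfl



lemma det_ne_zero_iff {m : ℕ} (M : Matrix (Fin m) (Fin m) (F p)) :
    M.det ≠ 0 ↔ ∀ v, M *ᵥ v = 0 → v = 0 := by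
  constructor
  · intro h v hv
    by_contra h0
    exact h (Matrix.exists_mulVec_eq_zero_iff.mp ⟨v, h0, hv⟩)
  · intro h hd
    obtain ⟨v, hv0, hv⟩ := Matrix.exists_mulVec_eq_zero_iff.mpr hd
    exact hv0 (h v hv)

lemma zero_eq_app : (0 : Fin (n+1) → F p) = app 0 0 := (app_eq_zero_iff.mpr ⟨rfl, rfl⟩).symm

/-- the Schur scalar -/
def mu (A : Matrix (Fin n) (Fin n) (F p)) (b : Fin n → F p) : F p := b ⬝ᵥ (A⁻¹ *ᵥ b)

lemma brd_det_ne_zero_iff_of_det_ne_zero {A : Matrix (Fin n) (Fin n) (F p)}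
    (hA : A.det ≠ 0) (b : Fin n → F p) (c : F p) :
    (brd A b c).det ≠ 0 ↔ c ≠ mu A b := by
  have hAu : IsUnit A.det := isUnit_iff_ne_zero.mpr hA
  constructor
  · intro h hc
    rw [det_ne_zero_iff] at h
    have h1 : A *ᵥ (A⁻¹ *ᵥ b) + (-1 : F p) • b = 0 := by
      rw [mulVec_mulVec, Matrix.mul_nonsing_inv _ hAu, one_mulVec]
      simp
    have h2 : b ⬝ᵥ (A⁻¹ *ᵥ b) + (-1 : F p) * c = 0 := by
      rw [hc, mu]; ring
    have := h (app (A⁻¹ *ᵥ b) (-1)) (by rw [brd_mulVec, h1, h2]; exact zero_eq_app.symm)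
    rw [zero_eq_app, app_eq_iff] at this
    exact one_ne_zero (neg_eq_zero.mp this.2)
  · intro hc
    rw [det_ne_zero_iff]
    intro v hv
    rw [app_surj v] at hv ⊢
    set x := fun i => v (finSumFinEquiv (Sum.inl i)) with hxdef
    set t := v (finSumFinEquiv (Sum.inr 0)) with htdef
    rw [brd_mulVec, zero_eq_app, app_eq_iff] at hv
    obtain ⟨h1, h2⟩ := hv
    have hx : x = (-t) • (A⁻¹ *ᵥ b) := by
      have hAx : A *ᵥ x = (-t) • b := by
        have := neg_eq_of_add_eq_zero_left h1
        rw [← this]; simp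
      calc x = A⁻¹ *ᵥ (A *ᵥ x) := by
              rw [mulVec_mulVec, Matrix.nonsing_inv_mul _ hAu, one_mulVec]
        _ = (-t) • (A⁻¹ *ᵥ b) := by rw [hAx, mulVec_smul]
    have ht : t * (c - mu A b) = 0 := by
      rw [hx, dotProduct_smul, smul_eq_mul] at h2
      rw [mu]
      linear_combination h2
    have ht0 : t = 0 := by
      rcases mul_eq_zero.mp ht with ht0 | hcm
      · exact ht0
      · exact absurd (sub_eq_zero.mp hcm) hc
    rw [ht0] at hx
    rw [ht0, hx]
    simp [zero_eq_app]

/-- key: a kernel vector of `A` orthogonal to `b` must vanish if the bordered matrix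
is invertible -/
lemma ker_dot_eq_zero {A : Matrix (Fin n) (Fin n) (F p)} {b : Fin n → F p} {c : F p}
    (hS : (brd A b c).det ≠ 0) {v : Fin n → F p} (hv : A *ᵥ v = 0) (hb : b ⬝ᵥ v = 0) :
    v = 0 := by
  rw [det_ne_zero_iff] at hS
  have := hS (app v 0) (by rw [brd_mulVec, hv, hb]; simp [zero_eq_app])
  rw [zero_eq_app, app_eq_iff] at this
  exact this.1

lemma card_ker_line {A : Matrix (Fin n) (Fin n) (F p)} {b : Fin n → F p} {c : F p}
    (hA : A.det = 0) (hS : (brd A b c).det ≠ 0) :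
    Nat.card {v : Fin n → F p // v ≠ 0 ∧ A *ᵥ v = 0} = p - 1 := by
  obtain ⟨v₀, hv₀, hker₀⟩ := Matrix.exists_mulVec_eq_zero_iff.mpr hA
  have hbv₀ : b ⬝ᵥ v₀ ≠ 0 := fun h => hv₀ (ker_dot_eq_zero hS hker₀ h)
  let φ : {v : Fin n → F p // v ≠ 0 ∧ A *ᵥ v = 0} → {y : F p // y ≠ 0} :=
    fun v => ⟨b ⬝ᵥ v.val, fun h => v.2.1 (ker_dot_eq_zero hS v.2.2 h)⟩
  have hbij : Function.Bijective φ := by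
    constructor
    · rintro ⟨v, hv1, hv2⟩ ⟨w, hw1, hw2⟩ h
      have h' : b ⬝ᵥ v = b ⬝ᵥ w := congrArg Subtype.val h
      have hd : A *ᵥ (v - w) = 0 := by rw [mulVec_sub, hv2, hw2, sub_zero]
      have hbd : b ⬝ᵥ (v - w) = 0 := by rw [dotProduct_sub, h', sub_self]
      have := ker_dot_eq_zero hS hd hbd
      exact Subtype.ext (sub_eq_zero.mp this)
    · rintro ⟨y, hy⟩
      refine ⟨⟨(y * (b ⬝ᵥ v₀)⁻¹) • v₀, ?_, by rw [mulVec_smul, hker₀, smul_zero]⟩, ?_⟩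
      · exact smul_ne_zero (mul_ne_zero hy (inv_ne_zero hbv₀)) hv₀
      · apply Subtype.ext
        simp only [φ, dotProduct_smul]
        field_simp
        rw [smul_eq_mul, div_mul_cancel₀ _ hbv₀]
    
  rw [Nat.card_congr (Equiv.ofBijective φ hbij)]
  rw [Nat.card_eq_fintype_card]
  rw [Fintype.card_subtype_compl (· = (0 : F p))]  -- hope defeq ≠ works
  rw [Fintype.card_subtype_eq, ZMod.card]

lemma app_add (x y : Fin n → F p) (t s : F p) : app x t + app y s = app (x + y) (t + s) := by
  funext i; simp only [Pi.add_apply, app, Function.comp_apply]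
  rcases finSumFinEquiv.symm i with a | a <;> simp

lemma app_smul (r : F p) (x : Fin n → F p) (t : F p) : r • app x t = app (r • x) (r * t) := by
  funext i; simp only [Pi.smul_apply, app, Function.comp_apply]
  rcases finSumFinEquiv.symm i with a | a <;> simp

def brdP (P : Matrix (Fin n) (Fin n) (F p)) : Matrix (Fin (n+1)) (Fin (n+1)) (F p) :=
  Matrix.reindex finSumFinEquiv finSumFinEquiv
    (Matrix.fromBlocks P 0 0 (1 : Matrix (Fin 1) (Fin 1) (F p)))

lemma reindex_mul {m : ℕ} (M N : Matrix (Fin m ⊕ Fin 1) (Fin m ⊕ Fin 1) (F p)) :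
    (Matrix.reindex finSumFinEquiv finSumFinEquiv M) *
      (Matrix.reindex finSumFinEquiv finSumFinEquiv N)
    = Matrix.reindex finSumFinEquiv finSumFinEquiv (M * N) := by
  simp only [reindex_apply]
  exact submatrix_mul_equiv M N _ finSumFinEquiv.symm _

lemma brdP_transpose (P : Matrix (Fin n) (Fin n) (F p)) : (brdP P)ᵀ = brdP Pᵀ := by
  rw [brdP, transpose_reindex, fromBlocks_transpose]
  simp [brdP]

lemma brdP_det (P : Matrix (Fin n) (Fin n) (F p)) : (brdP P).det = P.det := by
  rw [brdP, det_reindex_self, det_fromBlocks_zero₂₁]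
  simp

lemma colBlock_mul (M : Matrix (Fin n) (Fin n) (F p)) (b : Fin n → F p) :
    M * (Matrix.of fun i (_ : Fin 1) => b i) = Matrix.of fun i (_ : Fin 1) => (M *ᵥ b) i := by
  refine Matrix.ext fun i j => ?_
  simp [Matrix.mul_apply, mulVec, dotProduct]

lemma rowBlock_mul (M : Matrix (Fin n) (Fin n) (F p)) (b : Fin n → F p) :
    (Matrix.of fun (_ : Fin 1) j => b j) * M = Matrix.of fun (_ : Fin 1) j => (Mᵀ *ᵥ b) j := by
  refine Matrix.ext fun i j => ?_
  simp [Matrix.mul_apply, mulVec, dotProduct, transpose_apply, mul_comm]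

lemma brd_congr (A : Matrix (Fin n) (Fin n) (F p)) (b : Fin n → F p) (c : F p)
    (P : Matrix (Fin n) (Fin n) (F p)) :
    brd (Pᵀ * A * P) (Pᵀ *ᵥ b) c = (brdP P)ᵀ * brd A b c * brdP P := by
  rw [brdP_transpose]
  simp only [brdP, brd]
  rw [reindex_mul, reindex_mul, fromBlocks_multiply, fromBlocks_multiply]
  congr 1
  simp only [Matrix.zero_mul, Matrix.mul_zero, add_zero, zero_add,
    Matrix.mul_one, Matrix.one_mul, colBlock_mul, rowBlock_mul, transpose_transpose]

lemma det_brd_congr {A : Matrix (Fin n) (Fin n) (F p)} {b : Fin n → F p} {c : F p}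
    {P : Matrix (Fin n) (Fin n) (F p)} (hP : P.det ≠ 0) :
    (brd (Pᵀ * A * P) (Pᵀ *ᵥ b) c).det ≠ 0 ↔ (brd A b c).det ≠ 0 := by
  rw [brd_congr, det_mul, det_mul, det_transpose, brdP_det]
  constructor
  · intro h h0
    exact h (by rw [h0, mul_zero, zero_mul])
  · intro h
    exact mul_ne_zero (mul_ne_zero hP h) hP

lemma app01_single : app (0 : Fin n → F p) 1 = Pi.single (finSumFinEquiv (Sum.inr 0)) 1 := by
  funext i
  rw [show i = finSumFinEquiv (finSumFinEquiv.symm i) by simp]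
  rcases finSumFinEquiv.symm i with a | a
  · rw [app_inl]
    rw [Pi.single_eq_of_ne (finSumFinEquiv.injective.ne (by simp))]
    rfl
  · rw [app_inr, Subsingleton.elim a 0, Pi.single_eq_same]

lemma exists_P {v : Fin (n+1) → F p} (hv : v ≠ 0) :
    ∃ P : Matrix (Fin (n+1)) (Fin (n+1)) (F p), P.det ≠ 0 ∧ P *ᵥ app 0 1 = v := by
  obtain ⟨i₀, hi₀⟩ : ∃ i, v i ≠ 0 := by
    by_contra h; push_neg at h; exact hv (funext h)
  set l : Fin (n+1) := finSumFinEquiv (Sum.inr 0) with hl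
  set σ : Equiv.Perm (Fin (n+1)) := Equiv.swap i₀ l with hσ
  set E : Matrix (Fin (n+1)) (Fin (n+1)) (F p) :=
    (1 : Matrix (Fin (n+1)) (Fin (n+1)) (F p)).submatrix id ⇑σ with hE
  set U : Matrix (Fin (n+1)) (Fin (n+1)) (F p) :=
    Matrix.updateCol 1 l (fun i => v (σ i)) with hU
  have hUdet : U.det = v i₀ := by
    have := congrFun (congrFun (congrArg DFunLike.coe (Matrix.cramer_one (n := Fin (n+1))
      (α := F p))) (fun i => v (σ i))) l
    rw [Matrix.cramer_apply] at this
    rw [hU, this]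
    simp [hσ, Equiv.swap_apply_right]
  have hEdet : E.det ≠ 0 := by
    have h1 : E.det = Eᵀ.det := (Matrix.det_transpose E).symm
    have h2 : Eᵀ = (1 : Matrix (Fin (n+1)) (Fin (n+1)) (F p)).submatrix ⇑σ id := by
      rw [hE, Matrix.transpose_submatrix, Matrix.transpose_one]
    rw [h1, h2, Matrix.det_permute]
    simp only [Matrix.det_one, mul_one]
    rcases Int.units_eq_one_or (Equiv.Perm.sign σ) with h | h <;> rw [h] <;> simp
  refine ⟨E * U, ?_, ?_⟩
  · rw [det_mul, hUdet]
    exact mul_ne_zero hEdet hi₀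
  · rw [app01_single, ← mulVec_mulVec, ← hl]
    have hU1 : U *ᵥ Pi.single l 1 = fun i => v (σ i) := by
      rw [mulVec_single]
      funext i
      rw [Pi.smul_apply, MulOpposite.op_one, one_smul, Matrix.col_apply, hU, Matrix.updateCol_self]
    rw [hU1]
    have h5 : E *ᵥ (fun i => v (σ i)) =
        ((1 : Matrix (Fin (n+1)) (Fin (n+1)) (F p)) *ᵥ ((fun i => v (σ i)) ∘ ⇑σ.symm)) ∘ id := by
      rw [hE]
      exact submatrix_mulVec_equiv _ _ _ _
    rw [h5, one_mulVec]
    funext i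
    simp

lemma brd0_mulVec (A' : Matrix (Fin n) (Fin n) (F p)) (x : Fin n → F p) (s : F p) :
    brd A' 0 0 *ᵥ app x s = app (A' *ᵥ x) 0 := by
  rw [brd_mulVec]; simp

lemma card_fiber {v : Fin (n+1) → F p} (hv : v ≠ 0) :
    Nat.card {x : Matrix (Fin (n+1)) (Fin (n+1)) (F p) × (Fin (n+1) → F p) × F p //
      x.1.IsSymm ∧ x.1 *ᵥ v = 0 ∧ (brd x.1 x.2.1 x.2.2).det ≠ 0} =
    Nat.card {x : Matrix (Fin (n+1)) (Fin (n+1)) (F p) × (Fin (n+1) → F p) × F p //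
      x.1.IsSymm ∧ x.1 *ᵥ app 0 1 = 0 ∧ (brd x.1 x.2.1 x.2.2).det ≠ 0} := by
  obtain ⟨P, hP, hPe⟩ := exists_P hv
  have hPu : IsUnit P.det := isUnit_iff_ne_zero.mpr hP
  have hPinv : P⁻¹.det ≠ 0 := by
    rw [Matrix.det_nonsing_inv, Ring.inverse_eq_inv]
    exact inv_ne_zero hP
  have h1 : (P⁻¹)ᵀ * Pᵀ = 1 := by
    rw [← transpose_mul, Matrix.mul_nonsing_inv _ hPu, transpose_one]
  have h2 : P * P⁻¹ = 1 := Matrix.mul_nonsing_inv _ hPu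
  have h3 : Pᵀ * (P⁻¹)ᵀ = 1 := by
    rw [← transpose_mul, Matrix.nonsing_inv_mul _ hPu, transpose_one]
  have h4 : P⁻¹ * P = 1 := Matrix.nonsing_inv_mul _ hPu
  have hPev : P⁻¹ *ᵥ v = app 0 1 := by
    rw [← hPe, mulVec_mulVec, h4, one_mulVec]
  have hsymm : ∀ (Q B : Matrix (Fin (n+1)) (Fin (n+1)) (F p)), B.IsSymm → (Qᵀ * B * Q).IsSymm := by
    intro Q B hB
    unfold Matrix.IsSymm
    rw [transpose_mul, transpose_mul, transpose_transpose, hB, ← Matrix.mul_assoc]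
  have hkermap : ∀ (Q B : Matrix (Fin (n+1)) (Fin (n+1)) (F p)) (w u : Fin (n+1) → F p),
      Q *ᵥ u = w → B *ᵥ w = 0 → (Qᵀ * B * Q) *ᵥ u = 0 := by
    intro Q B w u hQu hBw
    rw [← Matrix.mulVec_mulVec, hQu, ← Matrix.mulVec_mulVec, hBw, mulVec_zero]
  have hmat : ∀ B : Matrix (Fin (n+1)) (Fin (n+1)) (F p), (P⁻¹)ᵀ * (Pᵀ * B * P) * P⁻¹ = B := by
    intro B
    simp only [Matrix.mul_assoc]
    rw [h2, Matrix.mul_one, ← Matrix.mul_assoc, h1, Matrix.one_mul]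
  have hmat' : ∀ B : Matrix (Fin (n+1)) (Fin (n+1)) (F p), Pᵀ * ((P⁻¹)ᵀ * B * P⁻¹) * P = B := by
    intro B
    simp only [Matrix.mul_assoc]
    rw [h4, Matrix.mul_one, ← Matrix.mul_assoc, h3, Matrix.one_mul]
  have hvec : ∀ b : Fin (n+1) → F p, (P⁻¹)ᵀ *ᵥ (Pᵀ *ᵥ b) = b := by
    intro b; rw [mulVec_mulVec, h1, one_mulVec]
  have hvec' : ∀ b : Fin (n+1) → F p, Pᵀ *ᵥ ((P⁻¹)ᵀ *ᵥ b) = b := by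
    intro b; rw [mulVec_mulVec, h3, one_mulVec]
  apply Nat.card_congr
  refine ⟨fun x => ⟨(Pᵀ * x.val.1 * P, Pᵀ *ᵥ x.val.2.1, x.val.2.2),
      hsymm P _ x.prop.1, hkermap P _ v _ hPe x.prop.2.1, (det_brd_congr hP).mpr x.prop.2.2⟩,
    fun x => ⟨((P⁻¹)ᵀ * x.val.1 * P⁻¹, (P⁻¹)ᵀ *ᵥ x.val.2.1, x.val.2.2),
      hsymm P⁻¹ _ x.prop.1, hkermap P⁻¹ _ (app 0 1) _ hPev x.prop.2.1,
      (det_brd_congr hPinv).mpr x.prop.2.2⟩, ?_, ?_⟩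
  · intro x
    apply Subtype.ext
    obtain ⟨⟨A, b, c⟩, hx⟩ := x
    simp only []
    rw [hmat A, hvec b]
  · intro x
    apply Subtype.ext
    obtain ⟨⟨A, b, c⟩, hx⟩ := x
    simp only []
    rw [hmat' A, hvec' b]

lemma double_brd_det_iff (A' : Matrix (Fin n) (Fin n) (F p)) (b' : Fin n → F p) (β c : F p) :
    (brd (brd A' 0 0) (app b' β) c).det ≠ 0 ↔ A'.det ≠ 0 ∧ β ≠ 0 := by
  constructor
  · intro h
    rw [det_ne_zero_iff] at h
    have hβ : β ≠ 0 := by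
      intro h0
      have hker : brd (brd A' 0 0) (app b' β) c *ᵥ app (app 0 1) 0 = 0 := by
        rw [brd_mulVec, brd0_mulVec, mulVec_zero, app_dot, h0]
        simp only [zero_smul, add_zero, dotProduct_zero, zero_mul, zero_add, mul_zero]
        simp [app_zero]
      have h5 := h _ hker
      obtain ⟨h6, -⟩ := app_eq_zero_iff.mp h5
      obtain ⟨-, h7⟩ := app_eq_zero_iff.mp h6
      exact one_ne_zero h7
    refine ⟨?_, hβ⟩
    intro hA0
    obtain ⟨x₀, hx0, hker₀⟩ := Matrix.exists_mulVec_eq_zero_iff.mpr hA0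
    have hker : brd (brd A' 0 0) (app b' β) c *ᵥ
        app (app x₀ (-(b' ⬝ᵥ x₀) * β⁻¹)) 0 = 0 := by
      rw [brd_mulVec, brd0_mulVec, hker₀, app_dot]
      rw [zero_smul, add_zero, zero_mul, add_zero]
      have hs : b' ⬝ᵥ x₀ + β * (-(b' ⬝ᵥ x₀) * β⁻¹) = 0 := by
        field_simp
        ring
      rw [hs]
      simp [app_zero]
    have h5 := h _ hker
    obtain ⟨h6, -⟩ := app_eq_zero_iff.mp h5
    obtain ⟨h7, -⟩ := app_eq_zero_iff.mp h6
    exact hx0 h7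
  · rintro ⟨hA, hβ⟩
    rw [det_ne_zero_iff]
    intro w hw
    rw [app_surj w] at hw ⊢
    set y := fun i => w (finSumFinEquiv (Sum.inl i)) with hy
    set t := w (finSumFinEquiv (Sum.inr 0)) with htd
    rw [app_surj y] at hw ⊢
    set x := fun i => y (finSumFinEquiv (Sum.inl i)) with hx
    set s := y (finSumFinEquiv (Sum.inr 0)) with hs
    rw [brd_mulVec, brd0_mulVec, app_smul, app_add, app_dot, zero_add] at hw
    obtain ⟨hw1, hw2⟩ := app_eq_zero_iff.mp hw
    obtain ⟨hw11, hw12⟩ := app_eq_zero_iff.mp hw1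
    have ht0 : t = 0 := by
      rcases mul_eq_zero.mp hw12 with h | h
      · exact h
      · exact absurd h hβ
    rw [ht0, zero_smul, add_zero] at hw11
    have hx0 : x = 0 := (det_ne_zero_iff A').mp hA x hw11
    have hs0 : s = 0 := by
      rw [ht0, zero_mul, add_zero, hx0, dotProduct_zero, zero_add] at hw2
      rcases mul_eq_zero.mp hw2 with h | h
      · exact absurd h hβ
      · exact h
    rw [hx0, hs0, ht0, app_zero, app_zero]

lemma mulVec_app01_eq_col (A : Matrix (Fin (n+1)) (Fin (n+1)) (F p)) :
    A *ᵥ app 0 1 = fun i => A i (finSumFinEquiv (Sum.inr 0)) := by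
  rw [app01_single, mulVec_single]
  funext i; rw [Pi.smul_apply, MulOpposite.op_one, one_smul, Matrix.col_apply]

lemma eq_brd0 {A : Matrix (Fin (n+1)) (Fin (n+1)) (F p)} (hA : A.IsSymm)
    (h : A *ᵥ app 0 1 = 0) : A = brd (blk A) 0 0 := by
  rw [mulVec_app01_eq_col] at h
  have hcol : ∀ i, A i (finSumFinEquiv (Sum.inr 0)) = 0 := fun i => congrFun h i
  have hoff : off A = 0 := funext fun i => hcol _
  have hcor : cor A = 0 := hcol _
  conv_lhs => rw [← brd_recon hA]
  rw [hoff, hcor]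

instance {m : ℕ} : DecidablePred (Matrix.IsSymm : Matrix (Fin m) (Fin m) (F p) → Prop) :=
  fun S => decidable_of_iff (Sᵀ = S) Iff.rfl

lemma card_Fp_ne : Nat.card {y : F p // y ≠ 0} = p - 1 := by
  rw [Nat.card_eq_fintype_card, Fintype.card_subtype_compl (· = (0 : F p)),
    Fintype.card_subtype_eq, ZMod.card]

lemma card_vec (m : ℕ) : Nat.card (Fin m → F p) = p ^ m := by
  rw [Nat.card_eq_fintype_card]
  simp [ZMod.card]

lemma card_Fp : Nat.card (F p) = p := by rw [Nat.card_eq_fintype_card, ZMod.card]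

lemma card_vec_ne (m : ℕ) : Nat.card {v : Fin m → F p // v ≠ 0} = p ^ m - 1 := by
  rw [Nat.card_eq_fintype_card, Fintype.card_subtype_compl (· = (0 : Fin m → F p)),
    Fintype.card_subtype_eq]
  congr 1
  simp [ZMod.card]

lemma card_split' {α : Type*} [Finite α] (Q : α → Prop) :
    Nat.card α = Nat.card {x // Q x} + Nat.card {x // ¬ Q x} := by
  classical
  rw [← Nat.card_sum, Nat.card_congr (Equiv.sumCompl Q)]

lemma card_split {α : Type*} [Finite α] (P Q : α → Prop) :
    Nat.card {x // P x} = Nat.card {x // P x ∧ Q x} + Nat.card {x // P x ∧ ¬ Q x} := by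
  rw [card_split' (fun y : {x // P x} => Q y.val),
    Nat.card_congr (Equiv.subtypeSubtypeEquivSubtypeInter P Q),
    Nat.card_congr (Equiv.subtypeSubtypeEquivSubtypeInter P (fun x => ¬ Q x))]

def prodSubtypeFstEquivSigma {α β : Type*} (P : α → β → Prop) :
    {x : α × β // P x.1 x.2} ≃ Σ a : α, {b : β // P a b} where
  toFun x := ⟨x.val.1, x.val.2, x.prop⟩
  invFun y := ⟨(y.1, y.2.val), y.2.prop⟩
  left_inv x := rfl
  right_inv y := rfl

def prodSubtypeSndEquivSigma {α β : Type*} (P : α → β → Prop) :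
    {x : α × β // P x.1 x.2} ≃ Σ b : β, {a : α // P a b} where
  toFun x := ⟨x.val.2, x.val.1, x.prop⟩
  invFun y := ⟨(y.2.val, y.1), y.2.prop⟩
  left_inv x := rfl
  right_inv y := rfl

@[simp] lemma blk_brd (A : Matrix (Fin n) (Fin n) (F p)) (b : Fin n → F p) (c : F p) :
    blk (brd A b c) = A := by
  refine Matrix.ext fun i j => ?_
  simp [blk, brd]

@[simp] lemma off_brd (A : Matrix (Fin n) (Fin n) (F p)) (b : Fin n → F p) (c : F p) :
    off (brd A b c) = b := by
  funext i
  simp [off, brd]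

@[simp] lemma cor_brd (A : Matrix (Fin n) (Fin n) (F p)) (b : Fin n → F p) (c : F p) :
    cor (brd A b c) = c := by
  simp [cor, brd]

def symmEquiv :
    ({A : Matrix (Fin (n+1)) (Fin (n+1)) (F p) // A.IsSymm} × (Fin (n+1) → F p) × F p) ≃
    {S : Matrix (Fin (n+2)) (Fin (n+2)) (F p) // S.IsSymm} where
  toFun x := ⟨brd x.1.val x.2.1 x.2.2, brd_isSymm x.1.prop _ _⟩
  invFun S := (⟨blk S.val, blk_isSymm S.prop⟩, off S.val, cor S.val)
  left_inv x := by
    obtain ⟨⟨A, hA⟩, b, c⟩ := x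
    simp only [blk_brd, off_brd, cor_brd]
  right_inv S := Subtype.ext (brd_recon S.prop)

/-- number of invertible symmetric matrices -/
def NN (p m : ℕ) : ℕ :=
  Nat.card {S : Matrix (Fin m) (Fin m) (ZMod p) // S.IsSymm ∧ S.det ≠ 0}

lemma NN_zero : NN p 0 = 1 := by
  rw [NN, Nat.card_eq_one_iff_unique]
  constructor
  · exact ⟨fun a b => Subtype.ext (by funext i; exact i.elim0)⟩
  · refine ⟨⟨1, ?_, ?_⟩⟩
    · rw [Matrix.IsSymm, transpose_one]
    · rw [Matrix.det_fin_zero]; exact one_ne_zero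

lemma NN_one : NN p 1 = p - 1 := by
  rw [NN, ← card_Fp_ne (p := p)]
  apply Nat.card_congr
  refine ⟨fun S => ⟨S.val 0 0, fun h => S.prop.2 (by rw [Matrix.det_fin_one]; exact h)⟩,
    fun y => ⟨Matrix.of fun _ _ => y.val, rfl, by rw [Matrix.det_fin_one]; exact y.prop⟩,
    ?_, ?_⟩
  · intro S
    apply Subtype.ext
    refine Matrix.ext fun i j => ?_
    rw [Subsingleton.elim i 0, Subsingleton.elim j 0]
    rfl
  · intro y
    rfl

lemma card_X0 :
    Nat.card {x : Matrix (Fin (n+1)) (Fin (n+1)) (F p) × (Fin (n+1) → F p) × F p //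
      x.1.IsSymm ∧ x.1 *ᵥ app 0 1 = 0 ∧ (brd x.1 x.2.1 x.2.2).det ≠ 0}
    = NN p n * (p ^ n * ((p - 1) * p)) := by
  classical
  let g : ({A' : Matrix (Fin n) (Fin n) (F p) // A'.IsSymm ∧ A'.det ≠ 0} ×
      (Fin n → F p) × {β : F p // β ≠ 0} × F p) →
      {x : Matrix (Fin (n+1)) (Fin (n+1)) (F p) × (Fin (n+1) → F p) × F p //
        x.1.IsSymm ∧ x.1 *ᵥ app 0 1 = 0 ∧ (brd x.1 x.2.1 x.2.2).det ≠ 0} :=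
    fun y => ⟨(brd y.1.val 0 0, app y.2.1 y.2.2.1.val, y.2.2.2),
      brd_isSymm y.1.prop.1 _ _,
      by rw [brd0_mulVec, mulVec_zero, app_zero],
      (double_brd_det_iff _ _ _ _).mpr ⟨y.1.prop.2, y.2.2.1.prop⟩⟩
  have hbij : Function.Bijective g := by
    constructor
    · rintro ⟨⟨A, hA⟩, b, ⟨β, hβ⟩, c⟩ ⟨⟨A', hA'⟩, b', ⟨β', hβ'⟩, c'⟩ h
      have hval := congrArg Subtype.val h
      have h1 := congrArg Prod.fst hval
      have h23 := congrArg Prod.snd hval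
      have h2 := congrArg Prod.fst h23
      have h3 := congrArg Prod.snd h23
      simp only [g] at h1 h2 h3
      obtain ⟨hAA, -, -⟩ := brd_eq_iff.mp h1
      obtain ⟨hbb, hββ⟩ := app_eq_iff.mp h2
      refine Prod.ext (Subtype.ext hAA) (Prod.ext hbb (Prod.ext (Subtype.ext hββ) h3))
    · rintro ⟨⟨A, b, c⟩, hsym, hker, hdet⟩
      have hA : A = brd (blk A) 0 0 := eq_brd0 hsym hker
      have hb : b = app (fun i => b (finSumFinEquiv (Sum.inl i)))
          (b (finSumFinEquiv (Sum.inr 0))) := app_surj b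
      rw [hA, hb] at hdet
      obtain ⟨hdA, hβ⟩ := (double_brd_det_iff _ _ _ _).mp hdet
      refine ⟨⟨⟨blk A, blk_isSymm hsym, hdA⟩,
        (fun i => b (finSumFinEquiv (Sum.inl i))), ⟨b (finSumFinEquiv (Sum.inr 0)), hβ⟩, c⟩, ?_⟩
      apply Subtype.ext
      show (brd (blk A) 0 0, app _ _, c) = (A, b, c)
      rw [← hA, ← hb]
  rw [← Nat.card_congr (Equiv.ofBijective g hbij), Nat.card_prod, Nat.card_prod,
    Nat.card_prod, card_vec, card_Fp_ne, card_Fp]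
  rfl

theorem NN_rec (n : ℕ) :
    NN p (n+2) = p^(n+1) * (p-1) * NN p (n+1) + p^(n+1) * (p^(n+1) - 1) * NN p n := by
  classical
  have hp2 : 2 ≤ p := (Fact.out : p.Prime).two_le
  -- Step B: borderize
  have hB : NN p (n+2) =
      Nat.card {x : {A : Matrix (Fin (n+1)) (Fin (n+1)) (F p) // A.IsSymm} ×
        ((Fin (n+1) → F p) × F p) // (brd x.1.val x.2.1 x.2.2).det ≠ 0} := by
    rw [NN,
      ← Nat.card_congr (Equiv.subtypeSubtypeEquivSubtypeInter
        (Matrix.IsSymm : Matrix (Fin (n+2)) (Fin (n+2)) (ZMod p) → Prop) (fun S => S.det ≠ 0))]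
    exact (Nat.card_congr (symmEquiv.subtypeEquiv (fun x => Iff.rfl))).symm
  -- Step C: split according to invertibility of the principal block
  rw [hB, card_split _ (fun x => x.1.val.det = 0)]
  -- Step D : principal block invertible
  have hD : Nat.card {x : {A : Matrix (Fin (n+1)) (Fin (n+1)) (F p) // A.IsSymm} ×
      ((Fin (n+1) → F p) × F p) // (brd x.1.val x.2.1 x.2.2).det ≠ 0 ∧ ¬ x.1.val.det = 0}
      = NN p (n+1) * (p ^ (n+1) * (p-1)) := by
    let e : {x : {A : Matrix (Fin (n+1)) (Fin (n+1)) (F p) // A.IsSymm} ×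
        ((Fin (n+1) → F p) × F p) // (brd x.1.val x.2.1 x.2.2).det ≠ 0 ∧ ¬ x.1.val.det = 0} ≃
        ({A : Matrix (Fin (n+1)) (Fin (n+1)) (F p) // A.IsSymm ∧ A.det ≠ 0} ×
          ((Fin (n+1) → F p) × {d : F p // d ≠ 0})) :=
      { toFun := fun x => (⟨x.val.1.val, x.val.1.prop, x.prop.2⟩, x.val.2.1,
          ⟨x.val.2.2 - mu x.val.1.val x.val.2.1,
           sub_ne_zero.mpr ((brd_det_ne_zero_iff_of_det_ne_zero x.prop.2 _ _).mp x.prop.1)⟩),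
        invFun := fun y => ⟨(⟨y.1.val, y.1.prop.1⟩, y.2.1, y.2.2.val + mu y.1.val y.2.1),
          ⟨(brd_det_ne_zero_iff_of_det_ne_zero y.1.prop.2 _ _).mpr
            (fun h => y.2.2.prop (add_eq_right.mp h)), y.1.prop.2⟩⟩,
        left_inv := fun x => by
          obtain ⟨⟨⟨A, hA⟩, b, c⟩, hx⟩ := x
          apply Subtype.ext
          show (_, _, c - mu A b + mu A b) = _
          rw [sub_add_cancel],
        right_inv := fun y => by
          obtain ⟨⟨A, hA⟩, b, ⟨d, hd⟩⟩ := y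
          show (_, _, (⟨d + mu A b - mu A b, _⟩ : {d : F p // d ≠ 0})) = _
          rw [Prod.ext_iff, Prod.ext_iff]
          refine ⟨rfl, rfl, Subtype.ext ?_⟩
          show d + mu A b - mu A b = d
          rw [add_sub_cancel_right] }
    rw [Nat.card_congr e, Nat.card_prod, Nat.card_prod, card_vec, card_Fp_ne]
    rfl
  -- Step E : principal block singular, double counting
  have hE : Nat.card {x : {A : Matrix (Fin (n+1)) (Fin (n+1)) (F p) // A.IsSymm} ×
      ((Fin (n+1) → F p) × F p) // (brd x.1.val x.2.1 x.2.2).det ≠ 0 ∧ x.1.val.det = 0}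
      = p^(n+1) * (p^(n+1) - 1) * NN p n := by
    set Q2 := Nat.card {x : {A : Matrix (Fin (n+1)) (Fin (n+1)) (F p) // A.IsSymm} ×
      ((Fin (n+1) → F p) × F p) // (brd x.1.val x.2.1 x.2.2).det ≠ 0 ∧ x.1.val.det = 0} with hQ2
    -- the incidence type
    let Y := {z : ({A : Matrix (Fin (n+1)) (Fin (n+1)) (F p) // A.IsSymm} ×
        ((Fin (n+1) → F p) × F p)) × (Fin (n+1) → F p) //
        (brd z.1.1.val z.1.2.1 z.1.2.2).det ≠ 0 ∧ z.2 ≠ 0 ∧ z.1.1.val *ᵥ z.2 = 0}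
    -- first fibration : over the matrix data
    let e1 : Y ≃ Σ (x : {x : {A : Matrix (Fin (n+1)) (Fin (n+1)) (F p) // A.IsSymm} ×
        ((Fin (n+1) → F p) × F p) // (brd x.1.val x.2.1 x.2.2).det ≠ 0 ∧ x.1.val.det = 0}),
        {v : Fin (n+1) → F p // v ≠ 0 ∧ x.val.1.val *ᵥ v = 0} :=
      { toFun := fun z => ⟨⟨z.val.1, z.prop.1,
          Matrix.exists_mulVec_eq_zero_iff.mp ⟨z.val.2, z.prop.2.1, z.prop.2.2⟩⟩,
          ⟨z.val.2, z.prop.2.1, z.prop.2.2⟩⟩,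
        invFun := fun y => ⟨(y.1.val, y.2.val), y.1.prop.1, y.2.prop.1, y.2.prop.2⟩,
        left_inv := fun z => rfl,
        right_inv := fun y => rfl }
    -- second fibration : over the kernel vector
    let e2 : Y ≃ Σ (v : {v : Fin (n+1) → F p // v ≠ 0}),
        {x : {A : Matrix (Fin (n+1)) (Fin (n+1)) (F p) // A.IsSymm} ×
          ((Fin (n+1) → F p) × F p) //
            x.1.val *ᵥ v.val = 0 ∧ (brd x.1.val x.2.1 x.2.2).det ≠ 0} :=
      { toFun := fun z => ⟨⟨z.val.2, z.prop.2.1⟩, ⟨z.val.1, z.prop.2.2, z.prop.1⟩⟩,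
        invFun := fun y => ⟨(y.2.val, y.1.val), y.2.prop.2, y.1.prop, y.2.prop.1⟩,
        left_inv := fun z => rfl,
        right_inv := fun y => rfl }
    have hY1 : Nat.card Y = Q2 * (p - 1) := by
      rw [Nat.card_congr e1, Nat.card_eq_fintype_card, Fintype.card_sigma]
      rw [Finset.sum_congr rfl (fun x _ => by
        rw [← Nat.card_eq_fintype_card, card_ker_line x.prop.2 x.prop.1])]
      rw [Finset.sum_const, smul_eq_mul, Finset.card_univ, ← Nat.card_eq_fintype_card, hQ2]
    have hY2 : Nat.card Y = (p^(n+1) - 1) * (NN p n * (p ^ n * ((p - 1) * p))) := by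
      rw [Nat.card_congr e2, Nat.card_eq_fintype_card, Fintype.card_sigma]
      have hfib : ∀ v : {v : Fin (n+1) → F p // v ≠ 0},
          Fintype.card {x : {A : Matrix (Fin (n+1)) (Fin (n+1)) (F p) // A.IsSymm} ×
            ((Fin (n+1) → F p) × F p) //
              x.1.val *ᵥ v.val = 0 ∧ (brd x.1.val x.2.1 x.2.2).det ≠ 0}
            = NN p n * (p ^ n * ((p - 1) * p)) := by
        intro v
        let ed : {x : {A : Matrix (Fin (n+1)) (Fin (n+1)) (F p) // A.IsSymm} ×
            ((Fin (n+1) → F p) × F p) //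
              x.1.val *ᵥ v.val = 0 ∧ (brd x.1.val x.2.1 x.2.2).det ≠ 0} ≃
            {x : Matrix (Fin (n+1)) (Fin (n+1)) (F p) × (Fin (n+1) → F p) × F p //
              x.1.IsSymm ∧ x.1 *ᵥ v.val = 0 ∧ (brd x.1 x.2.1 x.2.2).det ≠ 0} :=
          { toFun := fun x => ⟨(x.val.1.val, x.val.2.1, x.val.2.2),
              x.val.1.prop, x.prop.1, x.prop.2⟩,
            invFun := fun x => ⟨(⟨x.val.1, x.prop.1⟩, x.val.2.1, x.val.2.2),
              x.prop.2.1, x.prop.2.2⟩,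
            left_inv := fun x => rfl,
            right_inv := fun x => rfl }
        rw [← Nat.card_eq_fintype_card, Nat.card_congr ed, card_fiber v.prop, card_X0]
      rw [Finset.sum_congr rfl (fun v _ => hfib v), Finset.sum_const, smul_eq_mul,
        Finset.card_univ, ← Nat.card_eq_fintype_card, card_vec_ne]
    have hcancel : Q2 * (p - 1) = (p^(n+1) * (p^(n+1) - 1) * NN p n) * (p - 1) := by
      rw [← hY1, hY2, pow_succ]
      ring
    rw [hQ2] at hcancel ⊢
    exact Nat.eq_of_mul_eq_mul_right (by omega) hcancel
  rw [hD, hE]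
  ring

theorem NN_real (k : ℕ) :
    (NN p k : ℝ) = (p : ℝ) ^ (k * (k + 1) / 2) *
      ∏ j ∈ Finset.Icc 1 ((k + 1) / 2), (1 - (p : ℝ) ^ (1 - 2 * (j : ℤ))) := by
  have hp2 : 2 ≤ p := (Fact.out : p.Prime).two_le
  have hx0 : (p : ℝ) ≠ 0 := Nat.cast_ne_zero.mpr (by omega)
  have h1 : ((p - 1 : ℕ) : ℝ) = (p : ℝ) - 1 := by
    rw [Nat.cast_sub (by omega)]; norm_num
  induction k using Nat.strong_induction_on with
  | _ k ih =>
    match k with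
    | 0 =>
      rw [NN_zero, Finset.Icc_eq_empty (by omega), Finset.prod_empty]
      norm_num
    | 1 =>
      rw [NN_one, h1]
      rw [Finset.Icc_self, Finset.prod_singleton]
      norm_num
      field_simp
    | (n+2) =>
      have h2 : ((p ^ (n+1) - 1 : ℕ) : ℝ) = (p : ℝ) ^ (n+1) - 1 := by
        rw [Nat.cast_sub (Nat.one_le_pow _ _ (by omega))]
        push_cast; ring
      have key : (NN p (n+2) : ℝ) =
          (p:ℝ)^(n+1) * ((p:ℝ) - 1) * (NN p (n+1) : ℝ)
            + (p:ℝ)^(n+1) * ((p:ℝ)^(n+1) - 1) * (NN p n : ℝ) := by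
        rw [NN_rec]
        push_cast [h1, h2]
        ring
      rw [key, ih (n+1) (by omega), ih n (by omega)]
      obtain ⟨m, rfl | rfl⟩ := Nat.even_or_odd' n
      · -- n = 2m even
        have q1 : (2*m+2) * (2*m+2+1) / 2 = (m+1)*(2*m+3) :=
          Nat.div_eq_of_eq_mul_left (by norm_num) (by ring)
        have q2 : (2*m+1) * (2*m+1+1) / 2 = (2*m+1)*(m+1) :=
          Nat.div_eq_of_eq_mul_left (by norm_num) (by ring)
        have q3 : (2*m) * (2*m+1) / 2 = m*(2*m+1) :=
          Nat.div_eq_of_eq_mul_left (by norm_num) (by ring)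
        have q4 : (2*m+2+1) / 2 = m+1 := by omega
        have q5 : (2*m+1+1) / 2 = m+1 := by omega
        have q6 : (2*m+1) / 2 = m := by omega
        rw [q1, q2, q3, q4, q5, q6,
          Finset.prod_Icc_succ_top (by omega : 1 ≤ m+1)]
        have q7 : (1 - 2 * ((m+1 : ℕ) : ℤ)) = -((2*m+1 : ℕ) : ℤ) := by push_cast; ring
        rw [q7, _root_.zpow_neg, zpow_natCast]
        field_simp
        ring
      · -- n = 2m+1 odd
        have q1 : (2*m+1+2) * (2*m+1+2+1) / 2 = (2*m+3)*(m+2) :=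
          Nat.div_eq_of_eq_mul_left (by norm_num) (by ring)
        have q2 : (2*m+1+1) * (2*m+1+1+1) / 2 = (m+1)*(2*m+3) :=
          Nat.div_eq_of_eq_mul_left (by norm_num) (by ring)
        have q3 : (2*m+1) * (2*m+1+1) / 2 = (2*m+1)*(m+1) :=
          Nat.div_eq_of_eq_mul_left (by norm_num) (by ring)
        have q4 : (2*m+1+2+1) / 2 = (m+1)+1 := by omega
        have q5 : (2*m+1+1+1) / 2 = m+1 := by omega
        have q6 : (2*m+1+1) / 2 = m+1 := by omega
        rw [q1, q2, q3, q4, q5, q6,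
          Finset.prod_Icc_succ_top (by omega : 1 ≤ (m+1)+1)]
        have q7 : (1 - 2 * (((m+1)+1 : ℕ) : ℤ)) = -((2*m+3 : ℕ) : ℤ) := by push_cast; ring
        rw [q7, _root_.zpow_neg, zpow_natCast]
        field_simp
        ring

end MacW

/-- MacWilliams. The number of invertible symmetric `k × k` matrices over
`𝔽_p` equals `p^{k(k+1)/2} ⬝ ∏_{j=1}^{⌈k/2⌉} (1 - p^{1-2j})`. -/
theorem card_invertible_symmetric_matrices
    (p : ℕ) [Fact p.Prime] (k : ℕ) :
    (Nat.card {S : Matrix (Fin k) (Fin k) (ZMod p) // S.IsSymm ∧ S.det ≠ 0} : ℝ) =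
      (p : ℝ) ^ (k * (k + 1) / 2) *
        ∏ j ∈ Finset.Icc 1 ((k + 1) / 2), (1 - (p : ℝ) ^ (1 - 2 * (j : ℤ))) :=
  MacW.NN_real k

end
end
end

section
/- Let p be a prime and let M ∈ Sym_n(ℤ_p) be a diagonal matrix whose i-th diagonal entry is u_i p^{d_i} with u_i ∈ ℤ_p^× and d_i ≥ 0. If A is chosen from Sym_n(ℤ_p) according to its Haar probability measure, then the probability that there exists R ∈ M_n(ℤ_p) with A = M + MRM equals ∏_{i=1}^{n} p^{-(n+1)d_i}. -/
open MeasureTheory Matrix Finset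

noncomputable section

variable (p : ℕ) [Fact p.Prime]

/-- The image `A ℤ_p^n` as an additive subgroup of `ℤ_p^n`. -/
def imageSub {n : ℕ} (A : Matrix (Fin n) (Fin n) ℤ_[p]) : AddSubgroup (Fin n → ℤ_[p]) :=
  AddMonoidHom.range (Matrix.mulVecLin A).toAddMonoidHom

/-- The cokernel `ℤ_p^n / A ℤ_p^n`. -/
abbrev Coker {n : ℕ} (A : Matrix (Fin n) (Fin n) ℤ_[p]) :=
  (Fin n → ℤ_[p]) ⧸ imageSub p A

/-- A duality pairing with values in `ℚ_p/ℤ_p`: a symmetric bi-additive map `Γ × Γ → ℚ_p/ℤ_p`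
inducing an isomorphism `Γ ≃ Hom(Γ, ℚ_p/ℤ_p)`. -/
structure DualityPairingP (Γ : Type) [AddCommGroup Γ] where
  pair : Γ →+ Γ →+ QpModZp p
  symm : ∀ x y, pair x y = pair y x
  bij : Function.Bijective fun x => pair x

/-- The number of automorphisms of `Γ` preserving the pairing `δ`. -/
def autCardP (Γ : Type) [AddCommGroup Γ] (δ : DualityPairingP p Γ) : ℕ :=
  Nat.card {e : Γ ≃+ Γ // ∀ x y, δ.pair (e x) (e y) = δ.pair x y}

/-- Symmetric `n × n` matrices over `ℤ_p`, as an additive subgroup. -/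
def SymSub (n : ℕ) : AddSubgroup (Matrix (Fin n) (Fin n) ℤ_[p]) where
  carrier := {A | A.IsSymm}
  add_mem' := fun ha hb => ha.add hb
  zero_mem' := Matrix.isSymm_zero
  neg_mem' := fun ha => ha.neg

instance matMS (n : ℕ) : MeasurableSpace (Matrix (Fin n) (Fin n) ℤ_[p]) := borel _
instance matBS (n : ℕ) : BorelSpace (Matrix (Fin n) (Fin n) ℤ_[p]) := ⟨rfl⟩

/-- Haar probability measure of a measurable finite-index subgroup is `1/index`. -/
lemma addSubgroup_haar_measure {G : Type*} [AddCommGroup G] [MeasurableSpace G]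
    [MeasurableAdd G] (μ : Measure G) [μ.IsAddLeftInvariant] [IsProbabilityMeasure μ]
    (H : AddSubgroup G) (hm : MeasurableSet (H : Set G)) [Finite (G ⧸ H)] :
    μ (H : Set G) = (Nat.card (G ⧸ H) : ENNReal)⁻¹ := by
  classical
  haveI : Fintype (G ⧸ H) := Fintype.ofFinite _
  set s : (G ⧸ H) → Set G := fun q => (fun x => -q.out + x) ⁻¹' (H : Set G) with hs
  have hmem : ∀ (g : G) (q : G ⧸ H), g ∈ s q ↔ q = (g : G ⧸ H) := by
    intro g q
    rw [hs]
    simp only [Set.mem_preimage, SetLike.mem_coe]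
    rw [← QuotientAddGroup.eq (s := H) (a := q.out) (b := g), QuotientAddGroup.out_eq']
  have hdisj : Pairwise (Function.onFun Disjoint s) := by
    intro q q' hne
    rw [Function.onFun, Set.disjoint_left]
    intro g hg hg'
    exact hne (((hmem g q).1 hg).trans ((hmem g q').1 hg').symm)
  have hunion : (⋃ q, s q) = Set.univ :=
    Set.eq_univ_of_forall fun g => Set.mem_iUnion.2 ⟨(g : G ⧸ H), (hmem g _).2 rfl⟩
  have hmeas : ∀ q, MeasurableSet (s q) := fun q => hm.preimage (measurable_const_add _)
  have hval : ∀ q, μ (s q) = μ (H : Set G) := fun q => measure_preimage_add μ _ _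
  have h1 : (1 : ENNReal) = (Nat.card (G ⧸ H) : ENNReal) * μ (H : Set G) := by
    calc (1 : ENNReal) = μ Set.univ := (measure_univ (μ := μ)).symm
      _ = μ (⋃ q, s q) := by rw [hunion]
      _ = ∑' q, μ (s q) := measure_iUnion hdisj hmeas
      _ = ∑ q : G ⧸ H, μ (s q) := tsum_fintype _
      _ = ∑ _q : G ⧸ H, μ (H : Set G) := by simp only [hval]
      _ = (Fintype.card (G ⧸ H)) • μ (H : Set G) := by rw [Finset.sum_const, Finset.card_univ]
      _ = (Nat.card (G ⧸ H) : ENNReal) * μ (H : Set G) := by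
          rw [nsmul_eq_mul, Nat.card_eq_fintype_card]
  have hk0 : (Nat.card (G ⧸ H) : ENNReal) ≠ 0 := by
    exact_mod_cast Nat.card_pos.ne'
  calc μ (H : Set G)
      = ((Nat.card (G ⧸ H) : ENNReal)⁻¹ * (Nat.card (G ⧸ H) : ENNReal)) * μ (H : Set G) := by
        rw [ENNReal.inv_mul_cancel hk0 (ENNReal.natCast_ne_top _), one_mul]
    _ = (Nat.card (G ⧸ H) : ENNReal)⁻¹ * ((Nat.card (G ⧸ H) : ENNReal) * μ (H : Set G)) := by
        rw [mul_assoc]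
    _ = (Nat.card (G ⧸ H) : ENNReal)⁻¹ := by rw [← h1, mul_one]

/-- The subgroup of matrices with `(i,j)` entry divisible by `p^(d i + d j)`. -/
def dvdSub (n : ℕ) (d : Fin n → ℕ) : AddSubgroup (Matrix (Fin n) (Fin n) ℤ_[p]) where
  carrier := {A | ∀ i j, (p : ℤ_[p]) ^ (d i + d j) ∣ A i j}
  add_mem' := by
    intro a b ha hb i j
    simpa [Matrix.add_apply] using dvd_add (ha i j) (hb i j)
  zero_mem' := by intro i j; simp
  neg_mem' := by
    intro a ha i j
    simpa [Matrix.neg_apply] using (dvd_neg).2 (ha i j)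

lemma mem_dvdSub {n : ℕ} {d : Fin n → ℕ} {A : Matrix (Fin n) (Fin n) ℤ_[p]} :
    A ∈ dvdSub p n d ↔ ∀ i j, (p : ℤ_[p]) ^ (d i + d j) ∣ A i j := Iff.rfl

lemma isClosed_dvdSub (n : ℕ) (d : Fin n → ℕ) :
    IsClosed ((dvdSub p n d : Set (Matrix (Fin n) (Fin n) ℤ_[p]))) := by
  have hset : (dvdSub p n d : Set (Matrix (Fin n) (Fin n) ℤ_[p])) =
      ⋂ (i : Fin n) (j : Fin n),
        (fun A : Matrix (Fin n) (Fin n) ℤ_[p] => ‖A i j‖) ⁻¹'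
          (Set.Iic ((p : ℝ) ^ (-(d i + d j : ℕ) : ℤ))) := by
    ext A
    simp only [Set.mem_iInter, Set.mem_preimage, Set.mem_Iic, SetLike.mem_coe, mem_dvdSub]
    constructor
    · intro h i j
      rw [PadicInt.norm_le_pow_iff_mem_span_pow, Ideal.mem_span_singleton]
      exact h i j
    · intro h i j
      have := (PadicInt.norm_le_pow_iff_mem_span_pow (A i j) (d i + d j)).1 (h i j)
      rwa [Ideal.mem_span_singleton] at this
  rw [hset]
  refine isClosed_iInter fun i => isClosed_iInter fun j => IsClosed.preimage ?_ isClosed_Iic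
  exact continuous_norm.comp ((continuous_apply j).comp (continuous_apply i))

/-- Characterization of `A = M + MRM` for diagonal `M` with unit-times-power entries. -/
lemma exists_R_iff (n : ℕ) (d : Fin n → ℕ) (u : Fin n → ℤ_[p]) (hu : ∀ i, IsUnit (u i))
    (A : Matrix (Fin n) (Fin n) ℤ_[p]) :
    (∃ R : Matrix (Fin n) (Fin n) ℤ_[p],
        A = Matrix.diagonal (fun i => u i * (p : ℤ_[p]) ^ d i) +
          Matrix.diagonal (fun i => u i * (p : ℤ_[p]) ^ d i) * R *
            Matrix.diagonal (fun i => u i * (p : ℤ_[p]) ^ d i)) ↔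
      (A - Matrix.diagonal (fun i => u i * (p : ℤ_[p]) ^ d i)) ∈ dvdSub p n d := by
  set v : Fin n → ℤ_[p] := fun i => u i * (p : ℤ_[p]) ^ d i with hv
  constructor
  · rintro ⟨R, rfl⟩ i j
    have hentry : (Matrix.diagonal v + Matrix.diagonal v * R * Matrix.diagonal v -
        Matrix.diagonal v) i j = v i * R i j * v j := by
      simp [Matrix.sub_apply, Matrix.add_apply, Matrix.diagonal_mul, Matrix.mul_diagonal]
    rw [hentry]
    exact ⟨u i * R i j * u j, by rw [hv]; simp only []; ring⟩
  · intro h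
    choose c hc using h
    choose w hw using hu
    refine ⟨fun i j => (↑(w i)⁻¹ : ℤ_[p]) * c i j * ↑(w j)⁻¹, ?_⟩
    ext i j
    have h1 : u i * (↑(w i)⁻¹ : ℤ_[p]) = 1 := by rw [← hw i]; exact (w i).mul_inv
    have h2 : u j * (↑(w j)⁻¹ : ℤ_[p]) = 1 := by rw [← hw j]; exact (w j).mul_inv
    have key : (Matrix.diagonal v *
        (Matrix.of fun i j => (↑(w i)⁻¹ : ℤ_[p]) * c i j * ↑(w j)⁻¹) *
          Matrix.diagonal v) i j = (p : ℤ_[p]) ^ (d i + d j) * c i j := by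
      rw [Matrix.mul_diagonal, Matrix.diagonal_mul]
      show v i * ((↑(w i)⁻¹ : ℤ_[p]) * c i j * ↑(w j)⁻¹) * v j = _
      calc v i * ((↑(w i)⁻¹ : ℤ_[p]) * c i j * ↑(w j)⁻¹) * v j
          = (u i * ↑(w i)⁻¹) * (u j * ↑(w j)⁻¹) *
              ((p : ℤ_[p]) ^ d i * (p : ℤ_[p]) ^ d j * c i j) := by rw [hv]; ring
        _ = (p : ℤ_[p]) ^ (d i + d j) * c i j := by
            rw [h1, h2, one_mul, one_mul, pow_add]
    rw [Matrix.add_apply]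
    rw [show (fun i j => (↑(w i)⁻¹ : ℤ_[p]) * c i j * ↑(w j)⁻¹) =
      Matrix.of fun i j => (↑(w i)⁻¹ : ℤ_[p]) * c i j * ↑(w j)⁻¹ from rfl, key]
    have := hc i j
    rw [Matrix.sub_apply] at this
    exact sub_eq_iff_eq_add'.1 this

lemma sum_pairs_eq (n : ℕ) (d : Fin n → ℕ) :
    (∑ ij : {q : Fin n × Fin n // q.1 ≤ q.2}, (d ij.1.1 + d ij.1.2))
      = ∑ i : Fin n, (n + 1) * d i := by
  classical
  have h1 : (∑ ij : {q : Fin n × Fin n // q.1 ≤ q.2}, (d ij.1.1 + d ij.1.2))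
      = ∑ q ∈ Finset.univ.filter (fun q : Fin n × Fin n => q.1 ≤ q.2), (d q.1 + d q.2) :=
    (Finset.sum_subtype (Finset.univ.filter (fun q : Fin n × Fin n => q.1 ≤ q.2))
      (fun q => by simp) (fun q => d q.1 + d q.2)).symm
  rw [h1, Finset.sum_filter, Fintype.sum_prod_type]
  have h2 : ∀ i j : Fin n, (if i ≤ j then d i + d j else 0)
      = (if i ≤ j then d i else 0) + (if i ≤ j then d j else 0) := by
    intro i j; split <;> simp
  simp only [h2, Finset.sum_add_distrib]
  have h3 : ∀ i : Fin n, (∑ j : Fin n, if i ≤ j then d i else 0) = (n - i.val) * d i := by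
    intro i
    rw [← Finset.sum_filter, Finset.sum_const, smul_eq_mul]
    congr 1
    have he : Finset.univ.filter (fun j => i ≤ j) = Finset.Ici i := by ext j; simp
    rw [he, Fin.card_Ici]
  have h4 : (∑ i : Fin n, ∑ j : Fin n, if i ≤ j then d j else 0)
      = ∑ j : Fin n, (j.val + 1) * d j := by
    rw [Finset.sum_comm]
    refine Finset.sum_congr rfl fun j _ => ?_
    rw [← Finset.sum_filter, Finset.sum_const, smul_eq_mul]
    congr 1
    have he : Finset.univ.filter (fun i => i ≤ j) = Finset.Iic j := by ext i; simp
    rw [he, Fin.card_Iic]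
  simp only [h3]
  rw [h4, ← Finset.sum_add_distrib]
  refine Finset.sum_congr rfl fun i _ => ?_
  have hi := i.isLt
  rw [← add_mul]
  congr 1
  omega

lemma final_arith (n : ℕ) (d : Fin n → ℕ) :
    ((∏ ij : {q : Fin n × Fin n // q.1 ≤ q.2}, p ^ (d ij.1.1 + d ij.1.2) : ℕ) : ENNReal)⁻¹
      = ENNReal.ofReal (∏ i : Fin n, ((p : ℝ) ^ ((n + 1) * d i))⁻¹) := by
  have hp : 0 < p := (Fact.out (p := p.Prime)).pos
  rw [Finset.prod_pow_eq_pow_sum, sum_pairs_eq n d, Finset.prod_inv_distrib,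
    Finset.prod_pow_eq_pow_sum]
  rw [ENNReal.ofReal_inv_of_pos (by positivity)]
  congr 1
  rw [show ((p : ℝ)) ^ (∑ i : Fin n, (n + 1) * d i)
      = ((p ^ (∑ i : Fin n, (n + 1) * d i) : ℕ) : ℝ) by push_cast; ring,
    ENNReal.ofReal_natCast]

instance symBS (n : ℕ) : BorelSpace (SymSub p n) := Subtype.borelSpace _


/-- Let `M` be a diagonal matrix over `ℤ_p` with `i`-th diagonal entry
`u_i p^{d_i}` (`u_i` a unit). The Haar probability that a random symmetric matrix `A` can be
written as `A = M + MRM` with `R` integral equals `∏_i p^{-(n+1)d_i}`. -/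
theorem prob_A_eq_M_add_MRM
    (n : ℕ) (d : Fin n → ℕ) (u : Fin n → ℤ_[p]) (hu : ∀ i, IsUnit (u i))
    (M : Matrix (Fin n) (Fin n) ℤ_[p])
    (hM : M = Matrix.diagonal (fun i => u i * (p : ℤ_[p]) ^ d i))
    (μ : Measure (SymSub p n)) [μ.IsAddHaarMeasure] [IsProbabilityMeasure μ] :
    μ {A : SymSub p n | ∃ R : Matrix (Fin n) (Fin n) ℤ_[p],
        (A : Matrix (Fin n) (Fin n) ℤ_[p]) = M + M * R * M} =
      ENNReal.ofReal (∏ i : Fin n, ((p : ℝ) ^ ((n + 1) * d i))⁻¹) := by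
  classical
  subst hM
  let Φ : SymSub p n →+
      (∀ ij : {q : Fin n × Fin n // q.1 ≤ q.2}, ZMod (p ^ (d ij.1.1 + d ij.1.2))) :=
  { toFun := fun A ij => PadicInt.toZModPow (d ij.1.1 + d ij.1.2)
      ((A : Matrix (Fin n) (Fin n) ℤ_[p]) ij.1.1 ij.1.2)
    map_zero' := by funext ij; simp
    map_add' := by intro A B; funext ij; simp [Matrix.add_apply] }
  have hkermem : ∀ A : SymSub p n, A ∈ Φ.ker ↔
      ∀ i j, (p : ℤ_[p]) ^ (d i + d j) ∣ (A : Matrix (Fin n) (Fin n) ℤ_[p]) i j := by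
    intro A
    rw [AddMonoidHom.mem_ker]
    constructor
    · intro hA i j
      rcases le_total i j with h | h
      · have h0 := congrFun hA ⟨(i, j), h⟩
        rw [Pi.zero_apply] at h0
        have hmem := (RingHom.mem_ker (f := PadicInt.toZModPow _)).2 h0
        rwa [PadicInt.ker_toZModPow, Ideal.mem_span_singleton] at hmem
      · have h0 := congrFun hA ⟨(j, i), h⟩
        rw [Pi.zero_apply] at h0
        have hmem := (RingHom.mem_ker (f := PadicInt.toZModPow _)).2 h0
        rw [PadicInt.ker_toZModPow, Ideal.mem_span_singleton] at hmem
        have hsymm : (A : Matrix (Fin n) (Fin n) ℤ_[p]) j i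
            = (A : Matrix (Fin n) (Fin n) ℤ_[p]) i j := A.2.apply i j
        rwa [hsymm, add_comm (d j) (d i)] at hmem
    · intro hA
      funext ij
      obtain ⟨⟨i, j⟩, hij⟩ := ij
      rw [Pi.zero_apply]
      show PadicInt.toZModPow (d i + d j) ((A : Matrix (Fin n) (Fin n) ℤ_[p]) i j) = 0
      rw [← RingHom.mem_ker, PadicInt.ker_toZModPow, Ideal.mem_span_singleton]
      exact hA i j
  have hsurj : Function.Surjective Φ := by
    intro f
    have hBsymm : (Matrix.of fun i j : Fin n =>
        if h : i ≤ j then ((f ⟨(i, j), h⟩).val : ℤ_[p])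
        else ((f ⟨(j, i), le_of_not_ge h⟩).val : ℤ_[p])).IsSymm := by
      apply Matrix.IsSymm.ext
      intro i j
      simp only [Matrix.of_apply]
      by_cases h : i ≤ j
      · by_cases h' : j ≤ i
        · have hij : i = j := le_antisymm h h'
          subst hij; rfl
        · rw [dif_neg h', dif_pos h]
      · have h' : j ≤ i := le_of_not_ge h
        rw [dif_pos h', dif_neg h]
    refine ⟨⟨_, hBsymm⟩, ?_⟩
    funext ij
    obtain ⟨⟨i, j⟩, hij⟩ := ij
    show PadicInt.toZModPow (d i + d j) (Matrix.of _ i j) = f ⟨(i, j), hij⟩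
    have hBij : (Matrix.of fun i j : Fin n =>
        if h : i ≤ j then ((f ⟨(i, j), h⟩).val : ℤ_[p])
        else ((f ⟨(j, i), le_of_not_ge h⟩).val : ℤ_[p])) i j
        = ((f ⟨(i, j), hij⟩).val : ℤ_[p]) := by
      simp only [Matrix.of_apply]
      rw [dif_pos hij]
    rw [hBij, map_natCast]
    haveI : NeZero (p ^ (d i + d j)) := ⟨pow_ne_zero _ (Fact.out (p := p.Prime)).ne_zero⟩
    exact ZMod.natCast_rightInverse (f ⟨(i, j), hij⟩)
  haveI : ∀ ij : {q : Fin n × Fin n // q.1 ≤ q.2}, NeZero (p ^ (d ij.1.1 + d ij.1.2)) :=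
    fun ij => ⟨pow_ne_zero _ (Fact.out (p := p.Prime)).ne_zero⟩
  let eqv := QuotientAddGroup.quotientKerEquivOfSurjective Φ hsurj
  haveI : Finite (SymSub p n ⧸ Φ.ker) := Finite.of_equiv _ eqv.toEquiv.symm
  have hcard : Nat.card (SymSub p n ⧸ Φ.ker)
      = ∏ ij : {q : Fin n × Fin n // q.1 ≤ q.2}, p ^ (d ij.1.1 + d ij.1.2) := by
    rw [Nat.card_congr eqv.toEquiv, Nat.card_pi]
    exact Finset.prod_congr rfl fun ij _ => Nat.card_zmod _
  have hmH : MeasurableSet ((Φ.ker : AddSubgroup (SymSub p n)) : Set (SymSub p n)) := by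
    have hset : ((Φ.ker : AddSubgroup (SymSub p n)) : Set (SymSub p n))
        = Subtype.val ⁻¹' (dvdSub p n d : Set (Matrix (Fin n) (Fin n) ℤ_[p])) := by
      ext A
      simp only [SetLike.mem_coe, Set.mem_preimage]
      exact (hkermem A).trans (mem_dvdSub p).symm
    rw [hset]
    exact ((isClosed_dvdSub p n d).measurableSet).preimage measurable_subtype_coe
  have M'mem : Matrix.diagonal (fun i => u i * (p : ℤ_[p]) ^ d i) ∈ SymSub p n :=
    Matrix.isSymm_diagonal _
  set M' : SymSub p n := ⟨Matrix.diagonal (fun i => u i * (p : ℤ_[p]) ^ d i), M'mem⟩ with hM'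
  have hSet : {A : SymSub p n | ∃ R : Matrix (Fin n) (Fin n) ℤ_[p],
      (A : Matrix (Fin n) (Fin n) ℤ_[p]) =
        Matrix.diagonal (fun i => u i * (p : ℤ_[p]) ^ d i) +
          Matrix.diagonal (fun i => u i * (p : ℤ_[p]) ^ d i) * R *
            Matrix.diagonal (fun i => u i * (p : ℤ_[p]) ^ d i)}
      = (fun A => -M' + A) ⁻¹' ((Φ.ker : AddSubgroup (SymSub p n)) : Set (SymSub p n)) := by
    ext A
    simp only [Set.mem_setOf_eq, Set.mem_preimage, SetLike.mem_coe]
    rw [exists_R_iff p n d u hu, hkermem (-M' + A)]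
    have hcoe : ((-M' + A : SymSub p n) : Matrix (Fin n) (Fin n) ℤ_[p])
        = (A : Matrix (Fin n) (Fin n) ℤ_[p]) -
            Matrix.diagonal (fun i => u i * (p : ℤ_[p]) ^ d i) := by
      rw [AddSubgroup.coe_add, AddSubgroup.coe_neg, neg_add_eq_sub, hM']
    rw [hcoe]
    exact Iff.rfl
  rw [hSet, measure_preimage_add, addSubgroup_haar_measure μ Φ.ker hmH, hcard]
  exact final_arith p n d


end
end

section
/- Let p be a prime and m ≥ 1. Every duality pairing δ on ℤ/p^mℤ satisfies δ(1,1) = a/p^m mod ℤ for a unique a ∈ (ℤ/p^mℤ)^×, every such a arises from a duality pairing, and two duality pairings δ_a, δ_b with δ_a(1,1) = a/p^m and δ_b(1,1) = b/p^m are isomorphic if and only if a·b⁻¹ is a square in (ℤ/p^mℤ)^×. Hence the isomorphism classes of duality pairings on ℤ/p^mℤ are in bijection with (ℤ/p^mℤ)^× / ((ℤ/p^mℤ)^×)². -/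
open Finset

noncomputable section

/-- The group `ℚ/ℤ`. -/
abbrev QZ := AddCircle (1 : ℚ)

/-- A duality pairing on a finite abelian group `Γ`: a symmetric bi-additive map
`Γ × Γ → ℚ/ℤ` inducing an isomorphism `Γ ≃ Hom(Γ, ℚ/ℤ)`. -/
structure DualityPairing (Γ : Type) [AddCommGroup Γ] where
  pair : Γ →+ Γ →+ QZ
  symm : ∀ x y, pair x y = pair y x
  bij : Function.Bijective fun x => pair x

/-- `#D(Γ)`, the number of duality pairings on `Γ`. -/
def pairingCount (Γ : Type) [AddCommGroup Γ] : ℕ := Nat.card (DualityPairing Γ)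

/-- `#Aut(Γ, δ)`, the number of automorphisms of `Γ` preserving the pairing `δ`. -/
def autPairingCard (Γ : Type) [AddCommGroup Γ] (δ : DualityPairing Γ) : ℕ :=
  Nat.card {e : Γ ≃+ Γ // ∀ x y, δ.pair (e x) (e y) = δ.pair x y}

/-- `Γ_λ = ⊕_i ℤ/p^{λ_i}ℤ`, the finite abelian `p`-group attached to a partition `λ`. -/
abbrev partitionGroup (p : ℕ) {m : ℕ} (lam : Nat.Partition m) : Type :=
  ∀ i : Fin lam.parts.toList.length, ZMod (p ^ lam.parts.toList.get i)

namespace DPHelp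
variable (N : ℕ) [NeZero N]

noncomputable def eQZ : ZMod N →+ QZ :=
  ZMod.lift N ⟨(QuotientAddGroup.mk' (AddSubgroup.zmultiples (1:ℚ))).comp
      (zmultiplesHom ℚ ((N:ℚ)⁻¹)),
    by
      have hN : (N:ℚ) ≠ 0 := Nat.cast_ne_zero.mpr (NeZero.ne N)
      simp only [AddMonoidHom.comp_apply, zmultiplesHom_apply, QuotientAddGroup.mk'_apply]
      rw [show ((N:ℤ) • ((N:ℚ)⁻¹) : ℚ) = 1 by rw [zsmul_eq_mul, Int.cast_natCast, mul_inv_cancel₀ hN]]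
      exact (AddCircle.coe_eq_zero_iff 1).mpr ⟨1, by simp⟩⟩

lemma eQZ_intCast (k : ℤ) : eQZ N ((k : ℤ) : ZMod N) = (((k : ℚ) / (N : ℚ) : ℚ) : QZ) := by
  rw [eQZ, ZMod.lift_coe]
  simp only [AddMonoidHom.comp_apply, zmultiplesHom_apply, QuotientAddGroup.mk'_apply]
  norm_num [zsmul_eq_mul, div_eq_mul_inv]

lemma eQZ_apply (c : ZMod N) : eQZ N c = (((c.val : ℚ) / (N : ℚ) : ℚ) : QZ) := by
  have h : (((c.val : ℤ) : ℤ) : ZMod N) = c := by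
    push_cast
    exact ZMod.natCast_rightInverse c
  conv_lhs => rw [← h, eQZ_intCast]
  push_cast
  ring_nf

lemma torsion (z : QZ) (h : N • z = 0) : ∃ k : ℤ, z = (((k : ℚ) / (N : ℚ) : ℚ) : QZ) := by
  have hN : (N:ℚ) ≠ 0 := Nat.cast_ne_zero.mpr (NeZero.ne N)
  obtain ⟨q, rfl⟩ := QuotientAddGroup.mk_surjective z
  have h2 : ((N • q : ℚ) : QZ) = 0 := h
  rw [AddCircle.coe_eq_zero_iff] at h2
  obtain ⟨n, hn⟩ := h2
  have hq : (N:ℚ) * q = n := by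
    push_cast [zsmul_eq_mul, nsmul_eq_mul] at hn
    linarith
  exact ⟨n, by rw [show (q:ℚ) = (n:ℚ)/N by rw [eq_div_iff hN]; linarith]⟩

lemma eQZ_inj : Function.Injective (eQZ N) := by
  rw [injective_iff_map_eq_zero]
  intro c hc
  rw [eQZ_apply] at hc
  rw [AddCircle.coe_eq_zero_iff] at hc
  obtain ⟨n, hn⟩ := hc
  have hN : 0 < (N:ℚ) := by exact_mod_cast (NeZero.ne N).bot_lt
  have hv : (c.val : ℚ) = n * N := by
    rw [zsmul_eq_mul, mul_one, eq_div_iff (ne_of_gt hN)] at hn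
    linarith
  have hlt : (c.val : ℚ) < N := by exact_mod_cast ZMod.val_lt c
  have hge : (0:ℚ) ≤ (c.val : ℚ) := by positivity
  have hn0 : n = 0 := by
    rcases lt_trichotomy n 0 with h | h | h
    · nlinarith [show (n:ℚ) ≤ -1 by exact_mod_cast Int.le_of_lt_add_one (by simpa using h)]
    · exact h
    · nlinarith [show (1:ℚ) ≤ n by exact_mod_cast h]
  have : c.val = 0 := by
    have h0 : ((c.val : ℚ)) = 0 := by rw [hn0] at hv; push_cast at hv; linarith
    exact_mod_cast h0
  exact (ZMod.val_eq_zero c).mp this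

lemma hom_ext {A : Type*} [AddCommMonoid A] (g h : ZMod N →+ A) (H : g 1 = h 1) : g = h := by
  ext x
  have hx : x = x.val • (1 : ZMod N) := by
    rw [nsmul_eq_mul, mul_one]
    exact (ZMod.natCast_rightInverse x).symm
  rw [hx, map_nsmul, map_nsmul, H]

noncomputable def std (c : ZMod N) : ZMod N →+ ZMod N →+ QZ :=
  ((AddMonoidHom.mul.comp (AddMonoidHom.mulLeft c)).compr₂ (eQZ N))

lemma std_apply (c x y : ZMod N) : std N c x y = eQZ N (c * x * y) := rfl

lemma unit_of_inj (c : ZMod N) (h : ∀ x, c * x = 0 → x = 0) : IsUnit c := by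
  have hinj : Function.Injective (fun x : ZMod N => c * x) := by
    intro x y hxy
    have := h (x - y) (by simp only at hxy; rw [mul_sub, hxy, sub_self])
    linear_combination this
  obtain ⟨d, hd⟩ := (Finite.injective_iff_surjective.mp hinj) 1
  exact IsUnit.of_mul_eq_one (a := c) d hd

lemma pair_exists_std (δ : DualityPairing (ZMod N)) : ∃ c, δ.pair = std N c := by
  have ht : N • δ.pair 1 1 = 0 := by
    rw [← map_nsmul, show N • (1 : ZMod N) = 0 by
      rw [nsmul_eq_mul, mul_one]; exact ZMod.natCast_self N]
    simp
  obtain ⟨k, hk⟩ := torsion N _ ht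
  refine ⟨(k : ZMod N), hom_ext N _ _ (hom_ext N _ _ ?_)⟩
  rw [std_apply, mul_one, mul_one, eQZ_intCast, hk]

lemma std_bij (c : ZMod N) (hc : IsUnit c) :
    Function.Bijective fun x => std N c x := by
  have hinj : Function.Injective fun x => std N c x := by
    rw [injective_iff_map_eq_zero]
    intro x hx
    have h1 : eQZ N (c * x * 1) = 0 := by rw [← std_apply, hx]; rfl
    rw [mul_one] at h1
    have := eQZ_inj N (by rw [h1, map_zero] : eQZ N (c*x) = eQZ N 0)
    obtain ⟨u, rfl⟩ := hc
    have : (x : ZMod N) = ↑u⁻¹ * (↑u * x) := by rw [← mul_assoc, Units.inv_mul, one_mul]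
    rw [this, ‹↑u * x = 0›, mul_zero]
  refine ⟨hinj, ?_⟩
  intro f
  have ht : N • f 1 = 0 := by
    rw [← map_nsmul, show N • (1 : ZMod N) = 0 by
      rw [nsmul_eq_mul, mul_one]; exact ZMod.natCast_self N]
    simp
  obtain ⟨k, hk⟩ := torsion N _ ht
  obtain ⟨u, rfl⟩ := hc
  refine ⟨↑u⁻¹ * (k : ZMod N), hom_ext N _ _ ?_⟩
  rw [std_apply]
  rw [show (u : ZMod N) * (↑u⁻¹ * (k:ZMod N)) * 1 = (k : ZMod N) by
    rw [← mul_assoc, Units.mul_inv, one_mul, mul_one]]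
  rw [eQZ_intCast, hk]

end DPHelp

namespace DPHelp
variable (N : ℕ) [NeZero N]

noncomputable def stdPairing (a : (ZMod N)ˣ) : DualityPairing (ZMod N) where
  pair := std N ↑a
  symm := fun x y => by rw [std_apply, std_apply]; congr 1; ring
  bij := std_bij N ↑a a.isUnit

lemma stdPairing_pair (a : (ZMod N)ˣ) (x y : ZMod N) :
    (stdPairing N a).pair x y = eQZ N (↑a * x * y) := rfl

lemma key (δ : DualityPairing (ZMod N)) : ∃ a : (ZMod N)ˣ, δ = stdPairing N a := by
  obtain ⟨c, hc⟩ := pair_exists_std N δ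
  have hu : IsUnit c := by
    apply unit_of_inj
    intro x hx
    apply δ.bij.1
    show δ.pair x = δ.pair 0
    rw [hc, map_zero]
    apply hom_ext
    rw [std_apply, hx, zero_mul, map_zero, AddMonoidHom.zero_apply]
  obtain ⟨u, rfl⟩ := hu
  refine ⟨u, ?_⟩
  obtain ⟨pr, sy, bj⟩ := δ
  simp only at hc
  cases hc
  rfl

lemma stdPairing_inj : Function.Injective (stdPairing N) := by
  intro a b hab
  have h1 : (stdPairing N a).pair 1 1 = (stdPairing N b).pair 1 1 := by rw [hab]
  rw [stdPairing_pair, stdPairing_pair] at h1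
  simp only [mul_one] at h1
  exact Units.ext (eQZ_inj N h1)

lemma iso_iff (a b : (ZMod N)ˣ) :
    (∃ φ : ZMod N ≃+ ZMod N,
      ∀ x y, (stdPairing N b).pair (φ x) (φ y) = (stdPairing N a).pair x y) ↔
      IsSquare (a * b⁻¹) := by
  constructor
  · rintro ⟨φ, hφ⟩
    have hφ1 : ∀ x, φ x = φ 1 * x := by
      intro x
      have := hom_ext N φ.toAddMonoidHom (AddMonoidHom.mulLeft (φ 1)) (by simp)
      calc φ x = φ.toAddMonoidHom x := rfl
        _ = AddMonoidHom.mulLeft (φ 1) x := by rw [this]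
        _ = φ 1 * x := rfl
    have hu : IsUnit (φ 1) := by
      apply unit_of_inj
      intro x hx
      have : φ x = φ 0 := by rw [hφ1, hx, map_zero]
      exact φ.injective this
    obtain ⟨u, hu⟩ := hu
    have h11 := hφ 1 1
    rw [stdPairing_pair, stdPairing_pair] at h11
    have hsq : (b : ZMod N) * φ 1 * φ 1 = (a : ZMod N) := by
      have := eQZ_inj N h11
      linear_combination this
    refine ⟨u, ?_⟩
    rw [mul_inv_eq_iff_eq_mul]
    apply Units.ext
    push_cast
    rw [hu]
    linear_combination -hsq
  · rintro ⟨r, hr⟩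
    have hab : (a : ZMod N) = (b : ZMod N) * ((r : ZMod N) * (r : ZMod N)) := by
      have h : a = b * (r * r) := by
        rw [← hr, mul_comm b, inv_mul_cancel_right]
      rw [h]; push_cast; ring
    refine ⟨DistribMulAction.toAddEquiv (ZMod N) r, ?_⟩
    intro x y
    rw [stdPairing_pair, stdPairing_pair]
    congr 1
    have hs : ∀ z : ZMod N, (DistribMulAction.toAddEquiv (ZMod N) r) z = (r : ZMod N) * z :=
      fun z => rfl
    rw [hs, hs, hab]
    ring

end DPHelp


/-- Every duality pairing `δ` on `ℤ/p^mℤ` has `δ(1,1) = a/p^m mod ℤ` for a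
unique unit `a`, every unit `a` arises from some duality pairing, two pairings with values
`a/p^m` and `b/p^m` are isomorphic iff `a⬝b⁻¹` is a square in `(ℤ/p^mℤ)^×`, and hence the
isomorphism classes of duality pairings on `ℤ/p^mℤ` are in bijection with
`(ℤ/p^mℤ)^× / ((ℤ/p^mℤ)^×)²`. -/
theorem pairings_on_cyclic_classification (p m : ℕ) [Fact p.Prime] (hm : 1 ≤ m) :
    (∀ δ : DualityPairing (ZMod (p ^ m)), ∃! a : (ZMod (p ^ m))ˣ,
        δ.pair 1 1 = ((((a : ZMod (p ^ m)).val : ℚ) / (p : ℚ) ^ m : ℚ) : QZ)) ∧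
      (∀ a : (ZMod (p ^ m))ˣ, ∃ δ : DualityPairing (ZMod (p ^ m)),
        δ.pair 1 1 = ((((a : ZMod (p ^ m)).val : ℚ) / (p : ℚ) ^ m : ℚ) : QZ)) ∧
      (∀ (δa δb : DualityPairing (ZMod (p ^ m))) (a b : (ZMod (p ^ m))ˣ),
        δa.pair 1 1 = ((((a : ZMod (p ^ m)).val : ℚ) / (p : ℚ) ^ m : ℚ) : QZ) →
        δb.pair 1 1 = ((((b : ZMod (p ^ m)).val : ℚ) / (p : ℚ) ^ m : ℚ) : QZ) →
        ((∃ φ : ZMod (p ^ m) ≃+ ZMod (p ^ m),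
            ∀ x y, δb.pair (φ x) (φ y) = δa.pair x y) ↔ IsSquare (a * b⁻¹))) ∧
      Nonempty
        ((Quot (fun δ₁ δ₂ : DualityPairing (ZMod (p ^ m)) =>
          ∃ φ : ZMod (p ^ m) ≃+ ZMod (p ^ m), ∀ x y, δ₂.pair (φ x) (φ y) = δ₁.pair x y)) ≃
        ((ZMod (p ^ m))ˣ ⧸ MonoidHom.range (powMonoidHom 2 : (ZMod (p ^ m))ˣ →* (ZMod (p ^ m))ˣ))) := by
  have hp : p.Prime := Fact.out
  haveI : NeZero (p ^ m) := ⟨pow_ne_zero m hp.ne_zero⟩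
  set N := p ^ m with hNdef
  have hcast : ((N : ℕ) : ℚ) = (p : ℚ) ^ m := by rw [hNdef]; push_cast; ring
  have hval : ∀ c : ZMod N,
      ((((c.val : ℚ) / (p : ℚ) ^ m : ℚ) : QZ)) = DPHelp.eQZ N c := by
    intro c
    rw [DPHelp.eQZ_apply, hcast]
  refine ⟨?_, ?_, ?_, ?_⟩
  · intro δ
    obtain ⟨a, rfl⟩ := DPHelp.key N δ
    refine ⟨a, ?_, ?_⟩
    · show (DPHelp.stdPairing N a).pair 1 1 = ((((a : ZMod N).val : ℚ) / (p : ℚ) ^ m : ℚ) : QZ)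
      rw [hval, DPHelp.stdPairing_pair, mul_one, mul_one]
    · intro b hb
      rw [hval, DPHelp.stdPairing_pair] at hb
      simp only [mul_one] at hb
      exact (Units.ext (DPHelp.eQZ_inj N hb)).symm
  · intro a
    refine ⟨DPHelp.stdPairing N a, ?_⟩
    rw [hval, DPHelp.stdPairing_pair, mul_one, mul_one]
  · intro δa δb a b hA hB
    rw [hval] at hA hB
    obtain ⟨a', rfl⟩ := DPHelp.key N δa
    obtain ⟨b', rfl⟩ := DPHelp.key N δb
    rw [DPHelp.stdPairing_pair] at hA hB
    simp only [mul_one] at hA hB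
    have ha : a' = a := Units.ext (DPHelp.eQZ_inj N hA)
    have hb : b' = b := Units.ext (DPHelp.eQZ_inj N hB)
    subst ha; subst hb
    exact DPHelp.iso_iff N a' b'
  · set rel := fun δ₁ δ₂ : DualityPairing (ZMod N) =>
      ∃ φ : ZMod N ≃+ ZMod N, ∀ x y, δ₂.pair (φ x) (φ y) = δ₁.pair x y with hrel
    set S := MonoidHom.range (powMonoidHom 2 : (ZMod N)ˣ →* (ZMod N)ˣ) with hS
    have huospec : ∀ δ : DualityPairing (ZMod N),
        δ = DPHelp.stdPairing N (DPHelp.key N δ).choose := fun δ => (DPHelp.key N δ).choose_spec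
    have huostd : ∀ a : (ZMod N)ˣ, (DPHelp.key N (DPHelp.stdPairing N a)).choose = a :=
      fun a => (DPHelp.stdPairing_inj N (huospec (DPHelp.stdPairing N a)).symm)
    refine ⟨{
      toFun := Quot.lift
        (fun δ => (QuotientGroup.mk (DPHelp.key N δ).choose : (ZMod N)ˣ ⧸ S)) ?_
      invFun := Quotient.lift
        (fun a : (ZMod N)ˣ => Quot.mk rel (DPHelp.stdPairing N a)) ?_
      left_inv := ?_
      right_inv := ?_ }⟩
    · intro δ₁ δ₂ h
      rw [QuotientGroup.eq]
      rw [huospec δ₁, huospec δ₂] at h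
      have h' := (DPHelp.iso_iff N _ _).mp h
      obtain ⟨s, hs⟩ := h'
      refine ⟨s⁻¹, ?_⟩
      rw [powMonoidHom_apply, pow_two, ← mul_inv, ← hs, mul_inv_rev, inv_inv]
      exact mul_comm _ _
    · intro a b hab
      have hmem : a⁻¹ * b ∈ S := (QuotientGroup.leftRel_apply).mp hab
      obtain ⟨s, hs⟩ := hmem
      apply Quot.sound
      apply (DPHelp.iso_iff N a b).mpr
      refine ⟨s⁻¹, ?_⟩
      rw [powMonoidHom_apply, pow_two] at hs
      rw [show a * b⁻¹ = (a⁻¹ * b)⁻¹ by rw [mul_inv_rev, inv_inv]; exact mul_comm _ _, ← hs, mul_inv_rev]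
    · apply Quot.ind
      intro δ
      show Quot.mk rel (DPHelp.stdPairing N (DPHelp.key N δ).choose) = Quot.mk rel δ
      rw [← huospec δ]
    · intro q
      refine QuotientGroup.induction_on q ?_
      intro a
      show (QuotientGroup.mk (DPHelp.key N (DPHelp.stdPairing N a)).choose : (ZMod N)ˣ ⧸ S)
          = QuotientGroup.mk a
      rw [huostd a]

end
end

section
/- Let p be a prime, 0 ≤ r ≤ n, and let D ∈ M_n(ℤ_p) be a diagonal matrix whose first r diagonal entries are u_i p^{e_i} with u_i ∈ ℤ_p^× and 1 ≤ e_1 ≤ e_2 ≤ ... ≤ e_r, and whose remaining n−r diagonal entries are units of ℤ_p. If A is chosen from Sym_n(ℤ_p) according to its Haar probability measure, then the probability that Aℤ_p^n ⊆ Dℤ_p^n equals p^{−Σ_{i=1}^{r} e_i (n − r + i)} = p^{−(e_r n + e_{r-1}(n−1) + ... + e_1(n−(r−1)))}. -/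
open MeasureTheory Matrix Finset

noncomputable section

variable (p : ℕ) [Fact p.Prime]

section AuxMeasure

lemma meas_addsubgroup {G : Type*} [AddCommGroup G] [TopologicalSpace G]
    [IsTopologicalAddGroup G] [MeasurableSpace G] [BorelSpace G]
    (μ : Measure G) [μ.IsAddLeftInvariant] [IsProbabilityMeasure μ]
    (H : AddSubgroup G) (hm : MeasurableSet (H : Set G)) [Finite (G ⧸ H)] :
    μ (H : Set G) = (H.index : ENNReal)⁻¹ := by
  haveI : Fintype (G ⧸ H) := Fintype.ofFinite _
  set C : G ⧸ H → Set G := fun q => QuotientAddGroup.mk ⁻¹' {q} with hC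
  have key : ∀ q : G ⧸ H, C q = (fun g => -(Quotient.out q) + g) ⁻¹' (H : Set G) := by
    intro q
    ext g
    have hq : (QuotientAddGroup.mk (Quotient.out q) : G ⧸ H) = q := Quotient.out_eq q
    simp only [hC, Set.mem_preimage, Set.mem_singleton_iff, SetLike.mem_coe]
    constructor
    · intro h
      rw [← hq] at h
      have h2 := H.neg_mem ((QuotientAddGroup.eq).mp h)
      simpa [neg_add_rev] using h2
    · intro h
      rw [← hq]
      exact ((QuotientAddGroup.eq).mpr h).symm
  have hmeas : ∀ q : G ⧸ H, MeasurableSet (C q) := by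
    intro q
    rw [key q]
    exact hm.preimage (measurable_const_add _)
  have hμC : ∀ q : G ⧸ H, μ (C q) = μ (H : Set G) := by
    intro q
    rw [key q]
    exact measure_preimage_add μ _ _
  have hdisj : Pairwise (Function.onFun Disjoint C) := by
    intro a b hab
    simp only [Function.onFun, hC, Set.disjoint_left]
    rintro g (hg : _ = a) (hg' : _ = b)
    exact hab (hg ▸ hg' ▸ rfl)
  have huniv : (Set.univ : Set G) = ⋃ q, C q := by
    ext g; simp [hC]
  have h1 : (1 : ENNReal) = ∑ q : G ⧸ H, μ (C q) := by
    rw [← measure_univ (μ := μ), huniv, measure_iUnion hdisj hmeas, tsum_fintype]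
  rw [Finset.sum_congr rfl (fun q _ => hμC q)] at h1
  rw [Finset.sum_const, Finset.card_univ, nsmul_eq_mul] at h1
  have hcard : (Fintype.card (G ⧸ H) : ENNReal) = (H.index : ENNReal) := by
    rw [AddSubgroup.index, Nat.card_eq_fintype_card]
  rw [hcard] at h1
  have hne : (H.index : ENNReal) ≠ 0 := by
    simp [AddSubgroup.index, Nat.card_eq_fintype_card, Fintype.card_ne_zero]
  have htop : (H.index : ENNReal) ≠ ⊤ := ENNReal.natCast_ne_top _
  calc μ (H : Set G) = (H.index : ENNReal)⁻¹ * ((H.index : ENNReal) * μ (H : Set G)) := by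
        rw [← mul_assoc, ENNReal.inv_mul_cancel hne htop, one_mul]
    _ = (H.index : ENNReal)⁻¹ := by rw [← h1, mul_one]

lemma sum_max_eq (n r : ℕ) (hrn : r ≤ n) (e : Fin n → ℕ)
    (he0 : ∀ i : Fin n, r ≤ (i : ℕ) → e i = 0)
    (hmono : ∀ i j : Fin n, i ≤ j → (j : ℕ) < r → e i ≤ e j) :
    ∑ q : {q : Fin n × Fin n // q.1 ≤ q.2}, max (e q.1.1) (e q.1.2)
      = ∑ i : Fin n, e i * (n - r + (i : ℕ) + 1) := by
  classical
  have hsub : ∑ q : {q : Fin n × Fin n // q.1 ≤ q.2}, max (e q.1.1) (e q.1.2)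
      = ∑ q ∈ Finset.univ.filter (fun q : Fin n × Fin n => q.1 ≤ q.2),
          max (e q.1) (e q.2) := by
    rw [Finset.sum_subtype (p := fun q : Fin n × Fin n => q.1 ≤ q.2)
      (Finset.univ.filter (fun q : Fin n × Fin n => q.1 ≤ q.2))
      (fun x => by simp) (fun q => max (e q.1) (e q.2))]
  rw [hsub, Finset.sum_filter, Fintype.sum_prod_type, Finset.sum_comm]
  have inner : ∀ j : Fin n,
      (∑ i : Fin n, if i ≤ j then max (e i) (e j) else 0)
        = e j * ((j : ℕ) + 1) + (if r ≤ (j : ℕ) then ∑ i : Fin n, e i else 0) := by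
    intro j
    by_cases hj : r ≤ (j : ℕ)
    · have hej : e j = 0 := he0 j hj
      rw [if_pos hj, hej, zero_mul, zero_add]
      apply Finset.sum_congr rfl
      intro i _
      by_cases hij : i ≤ j
      · simp [hij, hej]
      · have : (j : ℕ) < (i : ℕ) := by
          have := lt_of_not_ge hij
          exact Fin.lt_iff_val_lt_val.mp this
        rw [if_neg hij, he0 i (le_trans hj (le_of_lt this))]
    · rw [if_neg hj, add_zero]
      have hjr : (j : ℕ) < r := lt_of_not_ge hj
      have step : ∀ i : Fin n, (if i ≤ j then max (e i) (e j) else 0)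
          = if i ≤ j then e j else 0 := by
        intro i
        by_cases hij : i ≤ j
        · rw [if_pos hij, if_pos hij, max_eq_right (hmono i j hij hjr)]
        · rw [if_neg hij, if_neg hij]
      rw [Finset.sum_congr rfl (fun i _ => step i), ← Finset.sum_filter]
      have : Finset.univ.filter (fun i : Fin n => i ≤ j) = Finset.Iic j := by
        ext i; simp
      rw [this, Finset.sum_const, Fin.card_Iic, smul_eq_mul, mul_comm]
  rw [Finset.sum_congr rfl (fun j _ => inner j), Finset.sum_add_distrib, ← Finset.sum_filter]
  have hcount : Finset.univ.filter (fun j : Fin n => r ≤ (j : ℕ)) =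
      if h : r < n then Finset.Ici (⟨r, h⟩ : Fin n) else ∅ := by
    split_ifs with h
    · ext j; simp [Fin.le_def]
    · have : r = n := le_antisymm hrn (le_of_not_gt h)
      ext j; simp [this, Nat.not_le.mpr j.isLt]
  rw [hcount]
  have hsecond : (∑ j ∈ (if h : r < n then Finset.Ici (⟨r, h⟩ : Fin n) else ∅),
      ∑ i : Fin n, e i) = (n - r) * ∑ i : Fin n, e i := by
    split_ifs with h
    · rw [Finset.sum_const, Fin.card_Ici, smul_eq_mul]
    · have : r = n := le_antisymm hrn (le_of_not_gt h)
      simp [this]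
  rw [hsecond]
  have rhs : ∀ i : Fin n, e i * (n - r + (i : ℕ) + 1)
      = e i * ((i : ℕ) + 1) + e i * (n - r) := by
    intro i; ring
  rw [Finset.sum_congr rfl (fun i _ => rhs i), Finset.sum_add_distrib, ← Finset.sum_mul,
    mul_comm]

variable {n : ℕ} (e : Fin n → ℕ)

abbrev PairT (n : ℕ) := {q : Fin n × Fin n // q.1 ≤ q.2}

def mexp (q : PairT n) : ℕ := max (e q.1.1) (e q.1.2)

def phi : SymSub p n →+ (∀ q : PairT n, ZMod (p ^ mexp e q)) where
  toFun A := fun q => PadicInt.toZModPow (mexp e q) ((A : Matrix (Fin n) (Fin n) ℤ_[p]) q.1.1 q.1.2)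
  map_zero' := by ext q; simp
  map_add' := by intro A B; ext q; simp

lemma mem_ker_phi (A : SymSub p n) :
    A ∈ (phi p e).ker ↔ ∀ i j : Fin n, (p : ℤ_[p]) ^ e i ∣ (A : Matrix (Fin n) (Fin n) ℤ_[p]) i j := by
  have hsymm : ∀ i j, (A : Matrix (Fin n) (Fin n) ℤ_[p]) j i = (A : Matrix (Fin n) (Fin n) ℤ_[p]) i j :=
    fun i j => A.2.apply i j
  have hker : ∀ (k : ℕ) (x : ℤ_[p]), PadicInt.toZModPow k x = 0 ↔ (p : ℤ_[p]) ^ k ∣ x := by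
    intro k x
    rw [← RingHom.mem_ker, PadicInt.ker_toZModPow, Ideal.mem_span_singleton]
  constructor
  · intro hA i j
    have hA' : ∀ q : PairT n, (p : ℤ_[p]) ^ mexp e q ∣
        (A : Matrix (Fin n) (Fin n) ℤ_[p]) q.1.1 q.1.2 := by
      intro q
      rw [← hker]
      exact congrFun (AddMonoidHom.mem_ker.mp hA) q
    rcases le_total i j with hij | hji
    · exact dvd_trans (pow_dvd_pow _ (le_max_left _ _)) (hA' ⟨(i, j), hij⟩)
    · rw [hsymm j i]
      exact dvd_trans (pow_dvd_pow _ (le_max_right _ _)) (hA' ⟨(j, i), hji⟩)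
  · intro h
    rw [AddMonoidHom.mem_ker]
    ext q
    show PadicInt.toZModPow _ _ = 0
    rw [hker]
    rcases max_cases (e q.1.1) (e q.1.2) with ⟨hm, _⟩ | ⟨hm, _⟩
    · rw [mexp, hm]; exact h q.1.1 q.1.2
    · rw [mexp, hm, ← hsymm q.1.1 q.1.2]; exact h q.1.2 q.1.1

lemma phi_surjective : Function.Surjective (phi p e) := by
  intro z
  classical
  set L : Fin n → Fin n → ℤ_[p] := fun i j =>
    if h : i ≤ j then ((z ⟨(i, j), h⟩).val : ℤ_[p])
    else ((z ⟨(j, i), le_of_not_ge h⟩).val : ℤ_[p]) with hL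
  have hsym : (Matrix.of L).IsSymm := by
    rw [Matrix.IsSymm]
    ext i j
    simp only [Matrix.transpose_apply, Matrix.of_apply, hL]
    by_cases h1 : j ≤ i <;> by_cases h2 : i ≤ j
    · have : i = j := le_antisymm h2 h1
      subst this; simp
    · rw [dif_pos h1, dif_neg h2]
    · rw [dif_neg h1, dif_pos h2]
    · exact absurd (le_total j i) (by simp [h1, h2])
  refine ⟨⟨Matrix.of L, hsym⟩, ?_⟩
  ext q
  obtain ⟨⟨i, j⟩, hij⟩ := q
  show PadicInt.toZModPow _ (L i j) = _
  haveI : NeZero (p ^ mexp e ⟨(i, j), hij⟩) :=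
    ⟨pow_ne_zero _ (Nat.Prime.ne_zero Fact.out)⟩
  rw [hL]
  simp only [dif_pos hij]
  rw [map_natCast]
  exact ZMod.natCast_rightInverse _

lemma index_ker_phi :
    (phi p e).ker.index = p ^ (∑ q : PairT n, mexp e q) := by
  have h1 : (phi p e).ker.index = Nat.card (∀ q : PairT n, ZMod (p ^ mexp e q)) := by
    rw [AddSubgroup.index]
    exact Nat.card_congr (QuotientAddGroup.quotientKerEquivOfSurjective _ (phi_surjective p e)).toEquiv
  rw [h1, Nat.card_pi]
  rw [Finset.prod_congr rfl (fun q _ => (Nat.card_zmod _))]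
  exact Finset.prod_pow_eq_pow_sum Finset.univ (mexp e) p

end AuxMeasure

/-- Let `D` be diagonal with first `r` diagonal entries `u_i p^{e_i}`
(`1 ≤ e_1 ≤ … ≤ e_r`, `u_i` units) and remaining diagonal entries units. The Haar probability
that a random symmetric matrix `A` satisfies `Aℤ_p^n ⊆ Dℤ_p^n` equals
`p^{-(e_r n + e_{r-1}(n-1) + ⋯ + e_1(n-(r-1)))}`. -/
theorem prob_image_le_diagonal_image
    (n r : ℕ) (hrn : r ≤ n) (e : Fin n → ℕ)
    (he0 : ∀ i : Fin n, r ≤ (i : ℕ) → e i = 0)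
    (he1 : ∀ i : Fin n, (i : ℕ) < r → 1 ≤ e i)
    (hmono : ∀ i j : Fin n, i ≤ j → (j : ℕ) < r → e i ≤ e j)
    (u : Fin n → ℤ_[p]) (hu : ∀ i, IsUnit (u i))
    (D : Matrix (Fin n) (Fin n) ℤ_[p])
    (hD : D = Matrix.diagonal (fun i => u i * (p : ℤ_[p]) ^ e i))
    (μ : Measure (SymSub p n)) [μ.IsAddHaarMeasure] [IsProbabilityMeasure μ] :
    μ {A : SymSub p n | ∀ x : Fin n → ℤ_[p], ∃ y : Fin n → ℤ_[p],
        D.mulVec y = (A : Matrix (Fin n) (Fin n) ℤ_[p]).mulVec x} =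
      ENNReal.ofReal
        (((p : ℝ) ^ (∑ i : Fin n, e i * (n - r + (i : ℕ) + 1)))⁻¹) := by
  classical
  have hset : {A : SymSub p n | ∀ x : Fin n → ℤ_[p], ∃ y : Fin n → ℤ_[p],
      D.mulVec y = (A : Matrix (Fin n) (Fin n) ℤ_[p]).mulVec x}
      = ((phi p e).ker : Set (SymSub p n)) := by
    ext A
    simp only [Set.mem_setOf_eq, SetLike.mem_coe]
    rw [mem_ker_phi]
    constructor
    · intro h i j
      obtain ⟨y, hy⟩ := h (Pi.single j 1)
      have h2 := congrFun hy i
      rw [hD] at h2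
      simp only [Matrix.mulVec_diagonal, Matrix.mulVec_single, mul_one, MulOpposite.op_one, one_smul,
        Matrix.col_apply] at h2
      exact ⟨u i * y i, by rw [← h2]; ring⟩
    · intro h x
      have hdvd : ∀ i, (p : ℤ_[p]) ^ e i ∣ (A : Matrix (Fin n) (Fin n) ℤ_[p]).mulVec x i := by
        intro i
        show (p : ℤ_[p]) ^ e i ∣ ∑ j, (A : Matrix (Fin n) (Fin n) ℤ_[p]) i j * x j
        exact Finset.dvd_sum (fun j _ => ((h i j).mul_right (x j)))
      choose c hc using hdvd
      refine ⟨fun i => (((hu i).unit⁻¹ : ℤ_[p]ˣ) : ℤ_[p]) * c i, ?_⟩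
      funext i
      rw [hD, Matrix.mulVec_diagonal, hc i]
      have hui : u i * (((hu i).unit⁻¹ : ℤ_[p]ˣ) : ℤ_[p]) = 1 := (hu i).mul_val_inv
      calc u i * (p : ℤ_[p]) ^ e i * ((((hu i).unit⁻¹ : ℤ_[p]ˣ) : ℤ_[p]) * c i)
          = (u i * (((hu i).unit⁻¹ : ℤ_[p]ˣ) : ℤ_[p])) * ((p : ℤ_[p]) ^ e i * c i) := by ring
        _ = (p : ℤ_[p]) ^ e i * c i := by rw [hui, one_mul]
  rw [hset]
  haveI : ∀ q : PairT n, NeZero (p ^ mexp e q) :=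
    fun q => ⟨pow_ne_zero _ (Nat.Prime.ne_zero Fact.out)⟩
  haveI : Finite ((SymSub p n) ⧸ (phi p e).ker) :=
    Finite.of_equiv _
      (QuotientAddGroup.quotientKerEquivOfSurjective _ (phi_surjective p e)).toEquiv.symm
  haveI : BorelSpace (SymSub p n) := Subtype.borelSpace ((SymSub p n : Set (Matrix (Fin n) (Fin n) ℤ_[p])))
  have hm : MeasurableSet ((phi p e).ker : Set (SymSub p n)) := by
    have hrepr : ((phi p e).ker : Set (SymSub p n)) = ⋂ i, ⋂ j,
        (fun A : SymSub p n => (A : Matrix (Fin n) (Fin n) ℤ_[p]) i j) ⁻¹'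
          {x : ℤ_[p] | ‖x‖ ≤ (p : ℝ) ^ (-(e i) : ℤ)} := by
      ext A
      simp only [SetLike.mem_coe, Set.mem_iInter, Set.mem_preimage, Set.mem_setOf_eq,
        mem_ker_phi]
      refine forall_congr' fun i => forall_congr' fun j => ?_
      rw [PadicInt.norm_le_pow_iff_mem_span_pow, Ideal.mem_span_singleton]
    rw [hrepr]
    refine MeasurableSet.iInter fun i => MeasurableSet.iInter fun j => ?_
    have hcont : Continuous (fun A : SymSub p n => (A : Matrix (Fin n) (Fin n) ℤ_[p]) i j) :=
      (continuous_subtype_val).matrix_elem i j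
    have hcl : IsClosed {x : ℤ_[p] | ‖x‖ ≤ (p : ℝ) ^ (-(e i) : ℤ)} :=
      IsClosed.preimage continuous_norm isClosed_Iic
    exact (hcl.preimage hcont).measurableSet
  rw [meas_addsubgroup μ _ hm, index_ker_phi]
  have hsum : (∑ q : PairT n, mexp e q) = ∑ i : Fin n, e i * (n - r + (i : ℕ) + 1) :=
    sum_max_eq n r hrn e he0 hmono
  rw [hsum]
  have hp0 : (0 : ℝ) < (p : ℝ) ^ (∑ i : Fin n, e i * (n - r + (i : ℕ) + 1)) := by
    have : (0 : ℝ) < (p : ℝ) := by exact_mod_cast (Fact.out : p.Prime).pos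
    positivity
  rw [ENNReal.ofReal_inv_of_pos hp0]
  congr 1
  rw [← ENNReal.ofReal_natCast (p ^ (∑ i : Fin n, e i * (n - r + (i : ℕ) + 1)))]
  congr 1
  push_cast
  ring


end
end
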